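/- arXiv:0904.1049 — 10 statements merged into one kernel-verified Lean document; each statement's English description precedes it below -/
import Mathlib

section
/- For all s with 0 ≤ s ≤ 1, the inequality 2^(s-1) ≤ Γ(1+s) ≤ 1 holds. -/
theorem stmt_0 (s : ℝ) (h0 : 0 ≤ s) (h1 : s ≤ 1) :
    (2 : ℝ) ^ (s - 1) ≤ Real.Gamma (1 + s) ∧ Real.Gamma (1 + s) ≤ 1 := by
  have hGpos : 0 < Real.Gamma (1 + s) := Real.Gamma_pos_of_pos (by linarith)
  have hG1 : Real.Gamma 1 = 1 := Real.Gamma_one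
  have hG2 : Real.Gamma 2 = 1 := Real.Gamma_two
  have hG3 : Real.Gamma 3 = 2 := by
    rw [show (3:ℝ) = 2 + 1 by norm_num, Real.Gamma_add_one two_ne_zero, hG2]; ring
  constructor
  · -- lower bound via log-convexity with points 1+s, 3 hitting 2
    set a : ℝ := 1 / (2 - s) with ha
    have h2s : (0:ℝ) < 2 - s := by linarith
    have ha0 : 0 ≤ a := by positivity
    have hb0 : 0 ≤ 1 - a := by
      rw [ha]; rw [sub_nonneg, div_le_one h2s]; linarith
    have hmem1 : (1 + s) ∈ Set.Ioi (0:ℝ) := by simp; linarith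
    have hmem3 : (3:ℝ) ∈ Set.Ioi (0:ℝ) := by norm_num
    have hkey := Real.convexOn_log_Gamma.2 hmem1 hmem3 ha0 hb0 (by ring)
    have hcomb : a • (1 + s) + (1 - a) • (3:ℝ) = 2 := by
      simp only [smul_eq_mul, ha]
      field_simp
      ring
    rw [hcomb] at hkey
    simp only [Function.comp_apply, smul_eq_mul, hG2, hG3, Real.log_one] at hkey
    -- hkey : 0 ≤ a * log (Γ (1+s)) + (1-a) * log 2
    have hlog : (s - 1) * Real.log 2 ≤ Real.log (Real.Gamma (1 + s)) := by
      have e : (2 - s) * (a * Real.log (Real.Gamma (1 + s)) + (1 - a) * Real.log 2)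
          = Real.log (Real.Gamma (1 + s)) + (1 - s) * Real.log 2 := by
        have hinv : (2 - s) * a = 1 := by
          rw [ha, mul_one_div, div_self h2s.ne']
        linear_combination (Real.log (Real.Gamma (1 + s)) - Real.log 2) * hinv
      have h := mul_nonneg h2s.le hkey
      rw [e] at h
      linarith
    calc (2:ℝ) ^ (s - 1) = Real.exp ((s - 1) * Real.log 2) := by
          rw [Real.rpow_def_of_pos (by norm_num), mul_comm]
      _ ≤ Real.exp (Real.log (Real.Gamma (1 + s))) := Real.exp_le_exp.2 hlog
      _ = Real.Gamma (1 + s) := Real.exp_log hGpos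
  · -- upper bound via convexity between 1 and 2
    have hmem1 : (1:ℝ) ∈ Set.Ioi (0:ℝ) := by norm_num
    have hmem2 : (2:ℝ) ∈ Set.Ioi (0:ℝ) := by norm_num
    have hkey := Real.convexOn_Gamma.2 hmem1 hmem2 (by linarith : 0 ≤ 1 - s) h0 (by ring)
    have hcomb : (1 - s) • (1:ℝ) + s • (2:ℝ) = 1 + s := by
      simp only [smul_eq_mul]; ring
    rw [hcomb] at hkey
    simp only [smul_eq_mul, hG1, hG2] at hkey
    linarith
end

section
/- For every positive integer n and every s with 0 ≤ s ≤ 1, one has exp((s-1)·ψ(n+1)) ≤ Γ(n+s)/Γ(n+1) ≤ n^(s-1). -/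
noncomputable def psi (x : ℝ) : ℝ := deriv (fun t => Real.log (Real.Gamma t)) x

theorem stmt_1 (n : ℕ) (hn : 1 ≤ n) (s : ℝ) (h0 : 0 ≤ s) (h1 : s ≤ 1) :
    Real.exp ((s - 1) * psi ((n : ℝ) + 1)) ≤ Real.Gamma ((n : ℝ) + s) / Real.Gamma ((n : ℝ) + 1) ∧
      Real.Gamma ((n : ℝ) + s) / Real.Gamma ((n : ℝ) + 1) ≤ (n : ℝ) ^ (s - 1) := by
  have hn' : (1 : ℝ) ≤ (n : ℝ) := by exact_mod_cast hn
  have hnpos : (0 : ℝ) < (n : ℝ) := by linarith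
  set f : ℝ → ℝ := fun t => Real.log (Real.Gamma t) with hf
  have hc : ConvexOn ℝ (Set.Ioi 0) f := Real.convexOn_log_Gamma
  have hns : (0 : ℝ) < (n : ℝ) + s := by linarith
  have hn1 : (0 : ℝ) < (n : ℝ) + 1 := by linarith
  have hGns : 0 < Real.Gamma ((n : ℝ) + s) := Real.Gamma_pos_of_pos hns
  have hGn1 : 0 < Real.Gamma ((n : ℝ) + 1) := Real.Gamma_pos_of_pos hn1
  have hGn : 0 < Real.Gamma (n : ℝ) := Real.Gamma_pos_of_pos hnpos
  have hratio : Real.Gamma ((n : ℝ) + s) / Real.Gamma ((n : ℝ) + 1) =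
      Real.exp (f ((n : ℝ) + s) - f ((n : ℝ) + 1)) := by
    rw [hf]
    rw [Real.exp_sub, Real.exp_log hGns, Real.exp_log hGn1]
  have hrec : f ((n : ℝ) + 1) = f (n : ℝ) + Real.log (n : ℝ) := by
    simp only [hf]
    rw [Real.Gamma_add_one hnpos.ne', Real.log_mul hnpos.ne' hGn.ne', add_comm]
  constructor
  · -- lower bound
    rcases eq_or_lt_of_le h1 with rfl | hs1
    · simp [hratio]
    · have hdiff : DifferentiableAt ℝ f ((n : ℝ) + 1) := by
        refine (Real.differentiableAt_Gamma ?_).log (Real.Gamma_ne_zero ?_) <;>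
          exact fun m => ne_of_gt (by linarith [Nat.cast_nonneg (α := ℝ) m])
      have hslope := hc.slope_le_deriv (x := (n : ℝ) + s) (y := (n : ℝ) + 1)
        (Set.mem_Ioi.mpr hns) (Set.mem_Ioi.mpr hn1) (by linarith) hdiff
      rw [slope_def_field] at hslope
      have hpsi : psi ((n : ℝ) + 1) = deriv f ((n : ℝ) + 1) := rfl
      have key : (s - 1) * psi ((n : ℝ) + 1) ≤ f ((n : ℝ) + s) - f ((n : ℝ) + 1) := by
        rw [hpsi]
        have h2 : (f ((n : ℝ) + 1) - f ((n : ℝ) + s)) / (1 - s) ≤ deriv f ((n : ℝ) + 1) := by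
          rwa [show (n : ℝ) + 1 - ((n : ℝ) + s) = 1 - s by ring] at hslope
        have h3 : f ((n : ℝ) + 1) - f ((n : ℝ) + s) ≤ (1 - s) * deriv f ((n : ℝ) + 1) := by
          rw [div_le_iff₀ (by linarith)] at h2
          linarith [h2]
        nlinarith
      rw [hratio]
      exact Real.exp_le_exp.mpr key
  · -- upper bound
    have hcomb := hc.2 (Set.mem_Ioi.mpr hnpos) (Set.mem_Ioi.mpr hn1)
      (by linarith : (0:ℝ) ≤ 1 - s) h0 (by ring)
    have heq : (1 - s) • (n : ℝ) + s • ((n : ℝ) + 1) = (n : ℝ) + s := by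
      simp [smul_eq_mul]; ring
    rw [heq] at hcomb
    simp only [smul_eq_mul] at hcomb
    have key : f ((n : ℝ) + s) - f ((n : ℝ) + 1) ≤ (s - 1) * Real.log (n : ℝ) := by
      have := hrec
      nlinarith [hcomb]
    rw [hratio, Real.rpow_def_of_pos hnpos, mul_comm]
    exact Real.exp_le_exp.mpr (by rw [mul_comm] at key ⊢; exact key)
end

section
/- For fixed positive integer n, the function f(s) = (1/(1-s))·ln(Γ(n+s)/Γ(n+1)) is monotonically decreasing on [0,1), and its limit as s → 1⁻ equals -ψ(n+1). -/
theorem stmt_2 (n : ℕ) (hn : 1 ≤ n) :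
    AntitoneOn (fun s : ℝ => (1 / (1 - s)) * Real.log (Real.Gamma ((n : ℝ) + s) / Real.Gamma ((n : ℝ) + 1)))
      (Set.Ico (0 : ℝ) 1) ∧
    Filter.Tendsto (fun s : ℝ => (1 / (1 - s)) * Real.log (Real.Gamma ((n : ℝ) + s) / Real.Gamma ((n : ℝ) + 1)))
      (nhdsWithin 1 (Set.Iio 1)) (nhds (-psi ((n : ℝ) + 1))) := by
  have hn' : (1 : ℝ) ≤ (n : ℝ) := by exact_mod_cast hn
  have hpos : ∀ s : ℝ, 0 ≤ s → (0 : ℝ) < (n : ℝ) + s := fun s hs => by linarith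
  have hGpos : ∀ s : ℝ, 0 ≤ s → 0 < Real.Gamma ((n : ℝ) + s) := fun s hs =>
    Real.Gamma_pos_of_pos (hpos s hs)
  have hG1 : 0 < Real.Gamma ((n : ℝ) + 1) := hGpos 1 zero_le_one
  -- rewrite f s as -(slope of log∘Γ between n+1 and n+s)
  have key : ∀ s : ℝ, 0 ≤ s → s < 1 →
      (1 / (1 - s)) * Real.log (Real.Gamma ((n : ℝ) + s) / Real.Gamma ((n : ℝ) + 1))
        = -((Real.log (Real.Gamma ((n : ℝ) + s)) - Real.log (Real.Gamma ((n : ℝ) + 1)))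
            / (((n : ℝ) + s) - ((n : ℝ) + 1))) := by
    intro s hs0 hs1
    rw [Real.log_div (hGpos s hs0).ne' hG1.ne']
    have h1 : (1 : ℝ) - s ≠ 0 := by linarith
    have h2 : s - 1 ≠ 0 := by linarith
    rw [show ((n : ℝ) + s) - ((n : ℝ) + 1) = s - 1 from by ring]
    field_simp
    ring
  constructor
  · intro x hx y hy hxy
    simp only [Set.mem_Ico] at hx hy
    dsimp only
    rw [key x hx.1 hx.2, key y hy.1 hy.2]
    have hmem : ∀ s : ℝ, 0 ≤ s → (n : ℝ) + s ∈ Set.Ioi (0 : ℝ) := fun s hs => hpos s hs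
    have := Real.convexOn_log_Gamma.secant_mono (a := (n : ℝ) + 1)
      (x := (n : ℝ) + x) (y := (n : ℝ) + y) (hmem 1 zero_le_one) (hmem x hx.1) (hmem y hy.1)
      (by intro h; apply absurd (add_left_cancel h) (by linarith [hx.2] : x ≠ 1))
      (by intro h; apply absurd (add_left_cancel h) (by linarith [hy.2] : y ≠ 1))
      (by linarith)
    simpa [Function.comp] using neg_le_neg this
  · -- differentiability of log ∘ Γ at n+1
    have hne : ∀ m : ℕ, (n : ℝ) + 1 ≠ -m := by
      intro m h
      have : (0 : ℝ) < (n : ℝ) + 1 := by linarith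
      rw [h] at this
      have : (0 : ℝ) ≤ (m : ℝ) := m.cast_nonneg
      linarith
    have hdiff : DifferentiableAt ℝ (fun t => Real.log (Real.Gamma t)) ((n : ℝ) + 1) :=
      (Real.differentiableAt_Gamma hne).log hG1.ne'
    have hderiv : HasDerivAt (fun t => Real.log (Real.Gamma t)) (psi ((n : ℝ) + 1)) ((n : ℝ) + 1) :=
      hdiff.hasDerivAt
    have hslope := hasDerivAt_iff_tendsto_slope.mp hderiv
    -- compose with s ↦ n + s
    have hcomp : Filter.Tendsto (fun s : ℝ => (n : ℝ) + s) (nhdsWithin 1 (Set.Iio 1))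
        (nhdsWithin ((n : ℝ) + 1) {((n : ℝ) + 1)}ᶜ) := by
      apply Filter.Tendsto.inf
      · exact (continuous_const.add continuous_id).continuousAt.tendsto
      · rw [Filter.tendsto_principal_principal]
        intro s hs
        simp only [Set.mem_Iio] at hs
        simp only [Set.mem_compl_iff, Set.mem_singleton_iff]
        intro h
        exact absurd (add_left_cancel h) (by linarith)
    have h2 : Filter.Tendsto (fun s : ℝ => slope (fun t => Real.log (Real.Gamma t)) ((n : ℝ) + 1)
        ((n : ℝ) + s)) (nhdsWithin 1 (Set.Iio 1)) (nhds (psi ((n : ℝ) + 1))) :=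
      hslope.comp hcomp
    have h3 := h2.neg
    apply h3.congr'
    have hmem : Set.Ioo (0 : ℝ) 1 ∈ nhdsWithin (1 : ℝ) (Set.Iio 1) := by
      rw [mem_nhdsWithin]
      exact ⟨Set.Ioi 0, isOpen_Ioi, by norm_num, by
        intro t ht
        exact ⟨ht.1, ht.2⟩⟩
    filter_upwards [hmem] with s hs
    rw [key s hs.1.le hs.2]
    simp [slope]
    ring
end

section
/- For 0 < s < 1 and x > 0, the double inequality exp((1-s)·ψ(x+√s)) < Γ(x+1)/Γ(x+s) < exp((1-s)·ψ(x+(s+1)/2)) holds (Kershaw's second double inequality). -/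
open Real Filter Topology Set

namespace KershawAux

lemma summable_shifted_sq : Summable (fun k : ℕ => 1 / ((k : ℝ) + 1) ^ 2) := by
  have := (summable_nat_add_iff (f := fun n : ℕ => 1 / (n : ℝ) ^ 2) 1).mpr
    (Real.summable_one_div_nat_pow.mpr one_lt_two)
  refine this.congr fun k => ?_
  push_cast
  ring_nf

lemma summable_inv_mul {a b : ℝ} (ha : 0 < a) (hb : 0 < b) :
    Summable (fun k : ℕ => 1 / ((a + k) * (b + k))) := by
  have hma : 0 < min a 1 := lt_min ha one_pos
  have hmb : 0 < min b 1 := lt_min hb one_pos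
  have key : ∀ k : ℕ, 1 / ((a + k) * (b + k)) ≤
      1 / (min a 1 * min b 1 * ((k : ℝ) + 1) ^ 2) := by
    intro k
    have hk : (0:ℝ) < (k : ℝ) + 1 := by positivity
    have h1 : min a 1 * ((k : ℝ) + 1) ≤ a + k := by
      rcases le_total a 1 with h | h
      · rw [min_eq_left h]; nlinarith [Nat.cast_nonneg (α := ℝ) k]
      · rw [min_eq_right h]; nlinarith [Nat.cast_nonneg (α := ℝ) k]
    have h2 : min b 1 * ((k : ℝ) + 1) ≤ b + k := by
      rcases le_total b 1 with h | h
      · rw [min_eq_left h]; nlinarith [Nat.cast_nonneg (α := ℝ) k]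
      · rw [min_eq_right h]; nlinarith [Nat.cast_nonneg (α := ℝ) k]
    refine one_div_le_one_div_of_le (by positivity) ?_
    nlinarith [mul_le_mul h1 h2 (by positivity : (0:ℝ) ≤ min b 1 * ((k:ℝ)+1)) (by positivity : (0:ℝ) ≤ a + k)]
  refine Summable.of_nonneg_of_le (fun k => by positivity) key ?_
  refine (summable_shifted_sq.mul_left (1 / (min a 1 * min b 1))).congr fun k => ?_
  rw [mul_one_div, div_div]

lemma diff_eq {a b : ℝ} (ha : 0 < a) (hb : 0 < b) (k : ℕ) :
    1 / (a + k) - 1 / (b + k) = (b - a) * (1 / ((a + k) * (b + k))) := by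
  have h1 : (0:ℝ) < a + k := by positivity
  have h2 : (0:ℝ) < b + k := by positivity
  field_simp
  ring

lemma summable_diff {a b : ℝ} (ha : 0 < a) (hb : 0 < b) :
    Summable (fun k : ℕ => 1 / (a + k) - 1 / (b + k)) :=
  ((summable_inv_mul ha hb).mul_left (b - a)).congr fun k => (diff_eq ha hb k).symm

lemma summable_sq {a : ℝ} (ha : 0 < a) : Summable (fun k : ℕ => 1 / (a + k) ^ 2) :=
  (summable_inv_mul ha ha).congr fun k => by rw [← sq]

lemma hasSum_telescope {a : ℝ} (ha : 0 < a) :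
    HasSum (fun k : ℕ => 1 / (a + k) - 1 / (a + 1 + k)) (1 / a) := by
  have hs : Summable fun k : ℕ => ‖1 / (a + k) - 1 / (a + 1 + k)‖ := by
    simpa [Real.norm_eq_abs] using (summable_diff ha (by linarith : (0:ℝ) < a + 1)).abs
  rw [hasSum_iff_tendsto_nat_of_summable_norm hs]
  have key : ∀ n : ℕ, ∑ k ∈ Finset.range n, (1 / (a + k) - 1 / (a + 1 + k)) =
      1 / a - 1 / (a + n) := by
    intro n
    rw [show (1:ℝ)/a = 1/(a + ((0:ℕ):ℝ)) by norm_num,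
      ← Finset.sum_range_sub' (f := fun k : ℕ => 1 / (a + k)) n]
    refine Finset.sum_congr rfl fun k _ => ?_
    push_cast
    ring_nf
  simp_rw [key]
  have h1 : Tendsto (fun n : ℕ => 1 / (a + n)) atTop (𝓝 0) := by
    simp only [one_div]
    exact Tendsto.inv_tendsto_atTop (tendsto_atTop_add_const_left _ a tendsto_natCast_atTop_atTop)
  simpa using (tendsto_const_nhds (x := 1 / a)).sub h1


lemma min_bound {a : ℝ} (ha : 0 < a) (k : ℕ) : min a 1 * ((k : ℝ) + 1) ≤ a + k := by
  rcases le_total a 1 with h | h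
  · rw [min_eq_left h]; nlinarith [Nat.cast_nonneg (α := ℝ) k]
  · rw [min_eq_right h]; nlinarith [Nat.cast_nonneg (α := ℝ) k]

noncomputable def P (x : ℝ) : ℝ := ∑' k : ℕ, (1 / (1 + (k : ℝ)) - 1 / (x + k))

noncomputable def P1 (x : ℝ) : ℝ := ∑' k : ℕ, 1 / (x + k) ^ 2

lemma summable_P {x : ℝ} (hx : 0 < x) :
    Summable (fun k : ℕ => 1 / (1 + (k : ℝ)) - 1 / (x + k)) :=
  summable_diff one_pos hx

noncomputable def c0seq (n : ℕ) : ℝ :=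
  Real.log n - ∑ k ∈ Finset.range (n + 1), (1 / (1 + (k : ℝ)))

lemma harm_cast (m : ℕ) :
    ((harmonic m : ℚ) : ℝ) = ∑ k ∈ Finset.range m, (1 / (1 + (k : ℝ))) := by
  rw [harmonic]
  push_cast
  refine Finset.sum_congr rfl fun k _ => by rw [inv_eq_one_div, add_comm]

lemma tendsto_c0seq : Tendsto c0seq atTop (𝓝 (-Real.eulerMascheroniConstant)) := by
  have h1 : Tendsto (fun n : ℕ => ((harmonic (n + 1) : ℚ) : ℝ) - Real.log ((n : ℝ) + 1))
      atTop (𝓝 Real.eulerMascheroniConstant) := by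
    have := Real.tendsto_harmonic_sub_log.comp (tendsto_add_atTop_nat 1)
    refine this.congr fun n => ?_
    simp only [Function.comp_apply]
    rw [Nat.add_comm]
    push_cast
    ring
  have h2 : Tendsto (fun n : ℕ => Real.log ((n : ℝ) + 1) - Real.log n) atTop (𝓝 0) := by
    have := Real.tendsto_harmonic_sub_log.sub Real.tendsto_harmonic_sub_log_add_one
    simpa using this.congr fun n => by push_cast; ring
  have := (h1.add h2).neg
  rw [show -(Real.eulerMascheroniConstant + 0) = -Real.eulerMascheroniConstant by ring] at this
  refine this.congr fun n => ?_
  rw [c0seq, ← harm_cast]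
  ring

lemma hasDerivAt_logGammaSeq (n : ℕ) {x : ℝ} (hx : 0 < x) :
    HasDerivAt (fun t => Real.BohrMollerup.logGammaSeq t n)
      (c0seq n + ∑ k ∈ Finset.range (n + 1), (1 / (1 + (k : ℝ)) - 1 / (x + k))) x := by
  have h_sum : HasDerivAt (fun t : ℝ => ∑ m ∈ Finset.range (n + 1), Real.log (t + m))
      (∑ m ∈ Finset.range (n + 1), 1 / (x + m)) x := by
    refine HasDerivAt.fun_sum fun m _ => ?_
    have hpos : (0:ℝ) < x + m := by positivity
    simpa [Function.comp_def] using (Real.hasDerivAt_log hpos.ne').comp x ((hasDerivAt_id x).add_const (m : ℝ))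
  have h_lin : HasDerivAt (fun t : ℝ => t * Real.log n + Real.log (Nat.factorial n))
      (Real.log n) x := (hasDerivAt_mul_const _).add_const _
  have h := h_lin.sub h_sum
  have hval : Real.log n - ∑ m ∈ Finset.range (n + 1), 1 / (x + m) =
      c0seq n + ∑ k ∈ Finset.range (n + 1), (1 / (1 + (k : ℝ)) - 1 / (x + k)) := by
    rw [c0seq, Finset.sum_sub_distrib]
    ring
  rw [hval] at h
  exact h

lemma hasDerivAt_logGamma {x : ℝ} (hx : 0 < x) :
    HasDerivAt (fun t => Real.log (Real.Gamma t)) (-Real.eulerMascheroniConstant + P x) x := by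
  refine hasDerivAt_of_tendstoLocallyUniformlyOn (l := (atTop : Filter ℕ)) (isOpen_Ioi (a := (0:ℝ)))
    (f := fun n t => Real.BohrMollerup.logGammaSeq t n)
    (f' := fun n t => c0seq n + ∑ k ∈ Finset.range (n + 1), (1 / (1 + (k : ℝ)) - 1 / (t + k)))
    (g' := fun t => -Real.eulerMascheroniConstant + P t) ?_ ?_ ?_ hx
  · rw [tendstoLocallyUniformlyOn_iff_forall_isCompact isOpen_Ioi]
    intro K hK hKc
    rcases K.eq_empty_or_nonempty with rfl | hne
    · intro u _
      filter_upwards with n t ht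
      exact absurd ht (Set.notMem_empty t)
    have haK : sInf K ∈ K := hKc.sInf_mem hne
    have hbK : sSup K ∈ K := hKc.sSup_mem hne
    set a := sInf K with ha_def
    set b := sSup K with hb_def
    have ha : 0 < a := hK haK
    have hb : 0 < b := hK hbK
    have hmem : ∀ t ∈ K, a ≤ t ∧ t ≤ b := fun t ht =>
      ⟨csInf_le hKc.bddBelow ht, le_csSup hKc.bddAbove ht⟩
    have hma : 0 < min a 1 := lt_min ha one_pos
    have hU1 : TendstoUniformlyOn (fun n (_ : ℝ) => c0seq n)
        (fun _ => -Real.eulerMascheroniConstant) atTop K :=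
      tendsto_c0seq.tendstoUniformlyOn_const K
    have hU2 : TendstoUniformlyOn
        (fun n t => ∑ k ∈ Finset.range n, (1 / (1 + (k : ℝ)) - 1 / (t + k)))
        (fun t => P t) atTop K := by
      have hsum : Summable (fun k : ℕ => (b + 1) * (1 / (min a 1 * ((k : ℝ) + 1) ^ 2))) := by
        refine (((summable_shifted_sq.mul_left (1 / (min a 1))).mul_left (b + 1))).congr fun k => ?_
        rw [mul_one_div, div_div]
      refine tendstoUniformlyOn_tsum_nat
        (u := fun k : ℕ => (b + 1) * (1 / (min a 1 * ((k : ℝ) + 1) ^ 2))) hsum ?_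
      intro k t ht
      obtain ⟨hat, htb⟩ := hmem t ht
      have ht0 : 0 < t := lt_of_lt_of_le ha hat
      have hk1 : (0:ℝ) < 1 + k := by positivity
      have htk : (0:ℝ) < t + k := by positivity
      rw [diff_eq one_pos ht0 k, Real.norm_eq_abs, abs_mul]
      have h1 : |t - 1| ≤ b + 1 := by
        rw [abs_le]; constructor <;> nlinarith
      have h2 : |1 / ((1 + (k:ℝ)) * (t + k))| ≤ 1 / (min a 1 * ((k : ℝ) + 1) ^ 2) := by
        rw [abs_of_pos (by positivity)]
        refine one_div_le_one_div_of_le (by positivity) ?_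
        have hlb : min a 1 * ((k : ℝ) + 1) ≤ a + k := min_bound ha k
        nlinarith [Nat.cast_nonneg (α := ℝ) k]
      exact mul_le_mul h1 h2 (abs_nonneg _) (by linarith)
    have hU2' : TendstoUniformlyOn
        (fun n t => ∑ k ∈ Finset.range (n + 1), (1 / (1 + (k : ℝ)) - 1 / (t + k)))
        (fun t => P t) atTop K := fun u hu => (tendsto_add_atTop_nat 1).eventually (hU2 u hu)
    exact hU1.add hU2'
  · exact Eventually.of_forall fun n t ht => hasDerivAt_logGammaSeq n ht
  · exact fun t ht => Real.BohrMollerup.tendsto_log_gamma ht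

lemma hasDerivAt_P {x : ℝ} (hx : 0 < x) : HasDerivAt P (P1 x) x := by
  refine hasDerivAt_of_tendstoLocallyUniformlyOn (l := (atTop : Filter ℕ)) (isOpen_Ioi (a := (0:ℝ)))
    (f := fun n t => ∑ k ∈ Finset.range n, (1 / (1 + (k : ℝ)) - 1 / (t + k)))
    (f' := fun n t => ∑ k ∈ Finset.range n, 1 / (t + k) ^ 2)
    (g' := P1) ?_ ?_ ?_ hx
  · rw [tendstoLocallyUniformlyOn_iff_forall_isCompact isOpen_Ioi]
    intro K hK hKc
    rcases K.eq_empty_or_nonempty with rfl | hne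
    · intro u _
      filter_upwards with n t ht
      exact absurd ht (Set.notMem_empty t)
    have haK : sInf K ∈ K := hKc.sInf_mem hne
    set a := sInf K with ha_def
    have ha : 0 < a := hK haK
    have hma : 0 < min a 1 := lt_min ha one_pos
    refine tendstoUniformlyOn_tsum_nat
      (u := fun k : ℕ => (1 / (min a 1) ^ 2) * (1 / ((k : ℝ) + 1) ^ 2))
      (summable_shifted_sq.mul_left _) ?_
    intro k t ht
    have hat : a ≤ t := csInf_le hKc.bddBelow ht
    have ht0 : 0 < t := lt_of_lt_of_le ha hat
    have htk : (0:ℝ) < t + k := by positivity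
    rw [Real.norm_eq_abs, abs_of_pos (by positivity)]
    have hlb : min a 1 * ((k : ℝ) + 1) ≤ t + k := by
      calc min a 1 * ((k : ℝ) + 1) ≤ a + k := min_bound ha k
        _ ≤ t + k := by linarith
    have : 1 / (t + k) ^ 2 ≤ 1 / (min a 1 * ((k : ℝ) + 1)) ^ 2 := by
      refine one_div_le_one_div_of_le (by positivity) ?_
      exact pow_le_pow_left₀ (by positivity) hlb 2
    refine this.trans (le_of_eq ?_)
    rw [mul_pow]
    rw [div_mul_eq_div_mul_one_div]
  · refine Eventually.of_forall fun n t ht => ?_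
    refine HasDerivAt.fun_sum fun k _ => ?_
    have ht0 : (0:ℝ) < t := ht
    have hpos : (0:ℝ) < t + k := by positivity
    have hinv : HasDerivAt (fun y : ℝ => 1 / (y + k)) (-(1 / (t + k) ^ 2)) t := by
      have := (hasDerivAt_inv hpos.ne').comp t ((hasDerivAt_id t).add_const (k : ℝ))
      simpa [one_div, Function.comp_def] using this
    simpa using (hinv.const_sub (1 / (1 + (k : ℝ)))).neg.neg
  · exact fun t ht => (summable_P ht).hasSum.tendsto_sum_nat


lemma psi_eq {x : ℝ} (hx : 0 < x) : psi x = -Real.eulerMascheroniConstant + P x :=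
  (hasDerivAt_logGamma hx).deriv

lemma hasDerivAt_psi {x : ℝ} (hx : 0 < x) : HasDerivAt psi (P1 x) x := by
  have h := (hasDerivAt_P hx).const_add (-Real.eulerMascheroniConstant)
  refine h.congr_of_eventuallyEq ?_
  filter_upwards [isOpen_Ioi.mem_nhds hx] with t ht
  exact psi_eq ht

lemma psi_diff {a b : ℝ} (ha : 0 < a) (hb : 0 < b) :
    psi b - psi a = ∑' k : ℕ, (1 / (a + k) - 1 / (b + k)) := by
  rw [psi_eq ha, psi_eq hb,
    show -Real.eulerMascheroniConstant + P b - (-Real.eulerMascheroniConstant + P a)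
      = P b - P a by ring, P, P, ← Summable.tsum_sub (summable_P hb) (summable_P ha)]
  exact tsum_congr fun k => by ring

lemma psi_add_one {y : ℝ} (hy : 0 < y) : psi (y + 1) = psi y + 1 / y := by
  have h := psi_diff hy (by linarith : (0:ℝ) < y + 1)
  rw [(hasSum_telescope hy).tsum_eq] at h
  linarith

lemma psi_lt_psi {a b : ℝ} (ha : 0 < a) (hab : a < b) : psi a < psi b := by
  have hb : 0 < b := ha.trans hab
  have h := psi_diff ha hb
  have hpos : 0 < ∑' k : ℕ, (1 / (a + k) - 1 / (b + k)) := by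
    refine Summable.tsum_pos (summable_diff ha hb) (fun k => ?_) 0 ?_
    · have h1 : (0:ℝ) < a + k := by positivity
      have : 1 / (b + k) ≤ 1 / (a + k) := one_div_le_one_div_of_le h1 (by linarith)
      linarith
    · simp only [Nat.cast_zero, add_zero]
      have : 1 / b < 1 / a := one_div_lt_one_div_of_lt ha hab
      linarith
  linarith

lemma logGamma_mvt {a b : ℝ} (ha : 0 < a) (hab : a < b) :
    ∃ ξ ∈ Ioo a b, Real.log (Real.Gamma b) - Real.log (Real.Gamma a) = (b - a) * psi ξ := by
  have hcont : ContinuousOn (fun t => Real.log (Real.Gamma t)) (Icc a b) := fun t ht =>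
    (hasDerivAt_logGamma (lt_of_lt_of_le ha ht.1)).continuousAt.continuousWithinAt
  have hderiv : ∀ t ∈ Ioo a b, HasDerivAt (fun t => Real.log (Real.Gamma t))
      (-Real.eulerMascheroniConstant + P t) t := fun t ht => hasDerivAt_logGamma (ha.trans ht.1)
  obtain ⟨ξ, hmem, heq⟩ := exists_hasDerivAt_eq_slope _ _ hab hcont hderiv
  refine ⟨ξ, hmem, ?_⟩
  rw [psi_eq (ha.trans hmem.1), heq, mul_div_cancel₀ _ (by linarith : b - a ≠ 0)]

noncomputable def F (s c : ℝ) (y : ℝ) : ℝ :=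
  Real.log (Real.Gamma (y + 1)) - Real.log (Real.Gamma (y + s)) - (1 - s) * psi (y + c)

lemma hasDerivAt_F {s c y : ℝ} (hs : 0 < s) (hc : 0 < c) (hy : 0 < y) :
    HasDerivAt (F s c) (psi (y + 1) - psi (y + s) - (1 - s) * P1 (y + c)) y := by
  have h1 : HasDerivAt (fun t : ℝ => Real.log (Real.Gamma (t + 1))) (psi (y + 1)) y := by
    rw [psi_eq (by linarith : (0:ℝ) < y + 1)]
    exact HasDerivAt.comp_add_const y 1 (hasDerivAt_logGamma (by linarith))
  have h2 : HasDerivAt (fun t : ℝ => Real.log (Real.Gamma (t + s))) (psi (y + s)) y := by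
    rw [psi_eq (by linarith : (0:ℝ) < y + s)]
    exact HasDerivAt.comp_add_const y s (hasDerivAt_logGamma (by linarith))
  have h3 : HasDerivAt (fun t : ℝ => psi (t + c)) (P1 (y + c)) y :=
    HasDerivAt.comp_add_const y c (hasDerivAt_psi (by linarith))
  exact (h1.sub h2).sub (h3.const_mul (1 - s))

lemma F_deriv_eq {s c y : ℝ} (hs0 : 0 < s) (hs1 : s < 1) (hc : 0 < c) (hy : 0 < y) :
    psi (y + 1) - psi (y + s) - (1 - s) * P1 (y + c) =
      ∑' k : ℕ, ((1 - s) * (1 / ((y + s + k) * (y + 1 + k))) -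
        (1 - s) * (1 / ((y + c + k) ^ 2))) := by
  have hys : (0:ℝ) < y + s := by linarith
  have hy1 : (0:ℝ) < y + 1 := by linarith
  have hyc : (0:ℝ) < y + c := by linarith
  have h1 : psi (y + 1) - psi (y + s) =
      ∑' k : ℕ, ((1 - s) * (1 / ((y + s + k) * (y + 1 + k)))) := by
    rw [psi_diff hys hy1]
    refine tsum_congr fun k => ?_
    rw [diff_eq hys hy1 k, show y + 1 - (y + s) = 1 - s by ring]
  have h2 : (1 - s) * P1 (y + c) = ∑' k : ℕ, ((1 - s) * (1 / ((y + c + k) ^ 2))) := by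
    rw [P1, ← tsum_mul_left]
  rw [h1, h2, ← Summable.tsum_sub ((summable_inv_mul hys hy1).mul_left _)
    ((summable_sq hyc).mul_left _)]

lemma F_deriv_pos {s y : ℝ} (hs0 : 0 < s) (hs1 : s < 1) (hy : 0 < y) :
    0 < psi (y + 1) - psi (y + s) - (1 - s) * P1 (y + (s + 1) / 2) := by
  have hc : (0:ℝ) < (s + 1) / 2 := by linarith
  rw [F_deriv_eq hs0 hs1 hc hy]
  have hsum : Summable (fun k : ℕ => (1 - s) * (1 / ((y + s + k) * (y + 1 + k))) -
      (1 - s) * (1 / ((y + (s + 1) / 2 + k) ^ 2))) :=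
    ((summable_inv_mul (by linarith) (by linarith)).mul_left _).sub
      ((summable_sq (by linarith)).mul_left _)
  have hterm : ∀ k : ℕ, 0 ≤ (1 - s) * (1 / ((y + s + k) * (y + 1 + k))) -
      (1 - s) * (1 / ((y + (s + 1) / 2 + k) ^ 2)) := by
    intro k
    have hk : (0:ℝ) ≤ k := Nat.cast_nonneg k
    have hA : (0:ℝ) < y + s + k := by linarith
    have hB : (0:ℝ) < y + 1 + k := by linarith
    have key : (y + s + k) * (y + 1 + k) ≤ (y + (s + 1) / 2 + k) ^ 2 := by
      nlinarith [sq_nonneg ((1 - s) / 2)]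
    have hle : 1 / ((y + (s + 1) / 2 + k) ^ 2) ≤ 1 / ((y + s + k) * (y + 1 + k)) :=
      one_div_le_one_div_of_le (by positivity) key
    nlinarith
  refine Summable.tsum_pos hsum hterm 0 ?_
  have hA : (0:ℝ) < y + s + (0:ℕ) := by norm_num; linarith
  simp only [Nat.cast_zero, add_zero]
  have key : (y + s) * (y + 1) < (y + (s + 1) / 2) ^ 2 := by
    nlinarith [sq_nonneg ((1 - s) / 2)]
  have hlt : 1 / ((y + (s + 1) / 2) ^ 2) < 1 / ((y + s) * (y + 1)) := by
    refine one_div_lt_one_div_of_lt (by positivity) key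
  nlinarith

lemma F_deriv_neg {s y : ℝ} (hs0 : 0 < s) (hs1 : s < 1) (hy : 0 < y) :
    psi (y + 1) - psi (y + s) - (1 - s) * P1 (y + Real.sqrt s) < 0 := by
  have hc : (0:ℝ) < Real.sqrt s := Real.sqrt_pos.mpr hs0
  have hsq : Real.sqrt s ^ 2 = s := Real.sq_sqrt hs0.le
  have hc1 : Real.sqrt s < 1 := by
    rw [show (1:ℝ) = Real.sqrt 1 by simp]
    exact Real.sqrt_lt_sqrt hs0.le hs1
  rw [F_deriv_eq hs0 hs1 hc hy]
  have hsum : Summable (fun k : ℕ => (1 - s) * (1 / ((y + s + k) * (y + 1 + k))) -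
      (1 - s) * (1 / ((y + Real.sqrt s + k) ^ 2))) :=
    ((summable_inv_mul (by linarith) (by linarith)).mul_left _).sub
      ((summable_sq (by linarith)).mul_left _)
  have hterm : ∀ k : ℕ, 0 ≤ -((1 - s) * (1 / ((y + s + k) * (y + 1 + k))) -
      (1 - s) * (1 / ((y + Real.sqrt s + k) ^ 2))) := by
    intro k
    have hk : (0:ℝ) ≤ k := Nat.cast_nonneg k
    have hA : (0:ℝ) < y + s + k := by linarith
    have hB : (0:ℝ) < y + 1 + k := by linarith
    have key : (y + Real.sqrt s + k) ^ 2 ≤ (y + s + k) * (y + 1 + k) := by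
      nlinarith [sq_nonneg (1 - Real.sqrt s)]
    have hle : 1 / ((y + s + k) * (y + 1 + k)) ≤ 1 / ((y + Real.sqrt s + k) ^ 2) :=
      one_div_le_one_div_of_le (by positivity) key
    nlinarith
  have hpos : 0 < ∑' k : ℕ, -((1 - s) * (1 / ((y + s + k) * (y + 1 + k))) -
      (1 - s) * (1 / ((y + Real.sqrt s + k) ^ 2))) := by
    refine Summable.tsum_pos hsum.neg hterm 0 ?_
    simp only [Nat.cast_zero, add_zero]
    have hid : (y + s) * (y + 1) - (y + Real.sqrt s) ^ 2 = (1 - Real.sqrt s) ^ 2 * y := by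
      linear_combination -(y + 1) * hsq
    have hppos : 0 < (1 - Real.sqrt s) ^ 2 * y :=
      mul_pos (pow_pos (by linarith : (0:ℝ) < 1 - Real.sqrt s) 2) hy
    have key : (y + Real.sqrt s) ^ 2 < (y + s) * (y + 1) := by linarith
    have hlt : 1 / ((y + s) * (y + 1)) < 1 / ((y + Real.sqrt s) ^ 2) := by
      refine one_div_lt_one_div_of_lt (by positivity) key
    nlinarith
  rw [tsum_neg] at hpos
  linarith


lemma abs_F_le {s c y : ℝ} (hs0 : 0 < s) (hs1 : s < 1) (hc0 : 0 < c) (hc1 : c < 1)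
    (hy : 0 < y) : |F s c y| ≤ (1 - s) * (1 / y) := by
  obtain ⟨ξ, hξ, heq⟩ := logGamma_mvt (a := y + s) (b := y + 1)
    (by linarith) (by linarith)
  have hξ0 : 0 < ξ := by have := hξ.1; linarith
  have h1 : psi y < psi ξ := psi_lt_psi hy (by have := hξ.1; linarith)
  have h2 : psi ξ < psi (y + 1) := psi_lt_psi hξ0 hξ.2
  have h3 : psi y < psi (y + c) := psi_lt_psi hy (by linarith)
  have h4 : psi (y + c) < psi (y + 1) := psi_lt_psi (by linarith) (by linarith)
  have h5 : psi (y + 1) = psi y + 1 / y := psi_add_one hy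
  have hFval : F s c y = (1 - s) * (psi ξ - psi (y + c)) := by
    rw [F, heq, show y + 1 - (y + s) = 1 - s by ring]
    ring
  rw [hFval, abs_mul, abs_of_pos (by linarith : (0:ℝ) < 1 - s)]
  refine mul_le_mul_of_nonneg_left ?_ (by linarith)
  rw [abs_le]
  constructor <;> linarith

lemma tendsto_F {s c x : ℝ} (hs0 : 0 < s) (hs1 : s < 1) (hc0 : 0 < c) (hc1 : c < 1)
    (hx : 0 < x) : Tendsto (fun n : ℕ => F s c (x + n)) atTop (𝓝 0) := by
  have hb : Tendsto (fun n : ℕ => (1 - s) * (1 / (x + n))) atTop (𝓝 0) := by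
    have h1 : Tendsto (fun n : ℕ => 1 / (x + (n:ℝ))) atTop (𝓝 0) := by
      simp only [one_div]
      exact Tendsto.inv_tendsto_atTop
        (tendsto_atTop_add_const_left _ x tendsto_natCast_atTop_atTop)
    simpa using h1.const_mul (1 - s)
  have habs : ∀ n : ℕ, |F s c (x + n)| ≤ (1 - s) * (1 / (x + n)) := fun n =>
    abs_F_le hs0 hs1 hc0 hc1 (by positivity)
  have hbneg : Tendsto (fun n : ℕ => -((1 - s) * (1 / (x + n)))) atTop (𝓝 0) := by
    simpa using hb.neg
  refine tendsto_of_tendsto_of_tendsto_of_le_of_le hbneg hb (fun n => ?_) (fun n => ?_)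
  · have := (abs_le.mp (habs n)).1; linarith
  · exact (abs_le.mp (habs n)).2

lemma F_neg {s x : ℝ} (hs0 : 0 < s) (hs1 : s < 1) (hx : 0 < x) :
    F s ((s + 1) / 2) x < 0 := by
  set c := (s + 1) / 2 with hc_def
  have hc0 : 0 < c := by rw [hc_def]; linarith
  have hc1 : c < 1 := by rw [hc_def]; linarith
  have hmono : StrictMonoOn (F s c) (Ioi 0) := by
    refine strictMonoOn_of_hasDerivWithinAt_pos (convex_Ioi 0)
      (f' := fun y => psi (y + 1) - psi (y + s) - (1 - s) * P1 (y + c))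
      (fun y hy => (hasDerivAt_F hs0 hc0 hy).continuousAt.continuousWithinAt) ?_ ?_
    · intro y hy
      rw [interior_Ioi] at hy
      exact ((hasDerivAt_F hs0 hc0 hy).hasDerivWithinAt).mono (by rw [interior_Ioi])
    · intro y hy
      rw [interior_Ioi] at hy
      rw [hc_def]
      exact F_deriv_pos hs0 hs1 hy
  have ht : Tendsto (fun n : ℕ => F s c (x + 1 + n)) atTop (𝓝 0) :=
    tendsto_F hs0 hs1 hc0 hc1 (by linarith)
  have hm : Monotone (fun n : ℕ => F s c (x + 1 + n)) := by
    intro m n hmn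
    rcases eq_or_lt_of_le hmn with h | h
    · rw [h]
    · refine le_of_lt (hmono ?_ ?_ ?_)
      · exact mem_Ioi.mpr (by positivity)
      · exact mem_Ioi.mpr (by positivity)
      · have : (m:ℝ) < n := by exact_mod_cast h
        linarith
  have h0 : F s c (x + 1 + (0:ℕ)) ≤ 0 := hm.ge_of_tendsto ht 0
  have hlt : F s c x < F s c (x + 1) :=
    hmono (mem_Ioi.mpr hx) (mem_Ioi.mpr (by linarith)) (by linarith)
  simp only [Nat.cast_zero, add_zero] at h0
  linarith

lemma F_pos {s x : ℝ} (hs0 : 0 < s) (hs1 : s < 1) (hx : 0 < x) :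
    0 < F s (Real.sqrt s) x := by
  set c := Real.sqrt s with hc_def
  have hc0 : 0 < c := Real.sqrt_pos.mpr hs0
  have hc1 : c < 1 := by
    rw [hc_def, show (1:ℝ) = Real.sqrt 1 by simp]
    exact Real.sqrt_lt_sqrt hs0.le hs1
  have hanti : StrictAntiOn (F s c) (Ioi 0) := by
    refine strictAntiOn_of_hasDerivWithinAt_neg (convex_Ioi 0)
      (f' := fun y => psi (y + 1) - psi (y + s) - (1 - s) * P1 (y + c))
      (fun y hy => (hasDerivAt_F hs0 hc0 hy).continuousAt.continuousWithinAt) ?_ ?_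
    · intro y hy
      rw [interior_Ioi] at hy
      exact ((hasDerivAt_F hs0 hc0 hy).hasDerivWithinAt).mono (by rw [interior_Ioi])
    · intro y hy
      rw [interior_Ioi] at hy
      rw [hc_def]
      exact F_deriv_neg hs0 hs1 hy
  have ht : Tendsto (fun n : ℕ => F s c (x + 1 + n)) atTop (𝓝 0) :=
    tendsto_F hs0 hs1 hc0 hc1 (by linarith)
  have hm : Antitone (fun n : ℕ => F s c (x + 1 + n)) := by
    intro m n hmn
    rcases eq_or_lt_of_le hmn with h | h
    · rw [h]
    · refine le_of_lt (hanti ?_ ?_ ?_)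
      · exact mem_Ioi.mpr (by positivity)
      · exact mem_Ioi.mpr (by positivity)
      · have : (m:ℝ) < n := by exact_mod_cast h
        linarith
  have h0 : 0 ≤ F s c (x + 1 + (0:ℕ)) := hm.le_of_tendsto ht 0
  have hlt : F s c (x + 1) < F s c x :=
    hanti (mem_Ioi.mpr hx) (mem_Ioi.mpr (by linarith)) (by linarith)
  simp only [Nat.cast_zero, add_zero] at h0
  linarith

end KershawAux

theorem stmt_3 (s x : ℝ) (hs0 : 0 < s) (hs1 : s < 1) (hx : 0 < x) :
    Real.exp ((1 - s) * psi (x + Real.sqrt s)) < Real.Gamma (x + 1) / Real.Gamma (x + s) ∧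
      Real.Gamma (x + 1) / Real.Gamma (x + s) < Real.exp ((1 - s) * psi (x + (s + 1) / 2)) := by
  have hG1 : 0 < Real.Gamma (x + 1) := Real.Gamma_pos_of_pos (by linarith)
  have hGs : 0 < Real.Gamma (x + s) := Real.Gamma_pos_of_pos (by linarith)
  have hratio : 0 < Real.Gamma (x + 1) / Real.Gamma (x + s) := by positivity
  have hlog : Real.log (Real.Gamma (x + 1) / Real.Gamma (x + s)) =
      Real.log (Real.Gamma (x + 1)) - Real.log (Real.Gamma (x + s)) :=
    Real.log_div hG1.ne' hGs.ne'
  constructor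
  · rw [← Real.exp_log hratio, Real.exp_lt_exp, hlog]
    have h := KershawAux.F_pos hs0 hs1 hx
    rw [KershawAux.F] at h
    linarith
  · rw [← Real.exp_log hratio, Real.exp_lt_exp, hlog]
    have h := KershawAux.F_neg hs0 hs1 hx
    rw [KershawAux.F] at h
    linarith
end

section
/- For y > 0, 0 < a < b, and n > 0, the inequality (y+a)^(-n) - (y+b)^(-n) > (b-a)·n·(y + (a+b)/2)^(-n-1) holds. -/
open Real Set

lemma midpoint_rpow_lt (p u v : ℝ) (hp : 0 < p) (hu : 0 < u) (hv : 0 < v) (huv : u ≠ v) :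
    2 * ((u + v) / 2) ^ (-p) < u ^ (-p) + v ^ (-p) := by
  have hm : 0 < (u + v) / 2 := by linarith
  have hlog : (Real.log u + Real.log v) / 2 < Real.log ((u + v) / 2) := by
    have := strictConcaveOn_log_Ioi.2 (mem_Ioi.2 hu) (mem_Ioi.2 hv) huv
      (by norm_num : (0:ℝ) < 1/2) (by norm_num : (0:ℝ) < 1/2) (by norm_num)
    simp only [smul_eq_mul] at this
    calc (Real.log u + Real.log v) / 2 = 1/2 * Real.log u + 1/2 * Real.log v := by ring
      _ < Real.log (1/2 * u + 1/2 * v) := this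
      _ = Real.log ((u + v) / 2) := by ring_nf
  have hexp : Real.exp ((-p * Real.log u + -p * Real.log v) / 2)
      ≤ (Real.exp (-p * Real.log u) + Real.exp (-p * Real.log v)) / 2 := by
    have := convexOn_exp.2 (mem_univ (-p * Real.log u)) (mem_univ (-p * Real.log v))
      (by norm_num : (0:ℝ) ≤ 1/2) (by norm_num : (0:ℝ) ≤ 1/2) (by norm_num)
    simp only [smul_eq_mul] at this
    calc Real.exp ((-p * Real.log u + -p * Real.log v) / 2)
        = Real.exp (1/2 * (-p * Real.log u) + 1/2 * (-p * Real.log v)) := by ring_nf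
      _ ≤ 1/2 * Real.exp (-p * Real.log u) + 1/2 * Real.exp (-p * Real.log v) := this
      _ = (Real.exp (-p * Real.log u) + Real.exp (-p * Real.log v)) / 2 := by ring
  have h1 : ((u + v) / 2) ^ (-p) = Real.exp (-p * Real.log ((u + v) / 2)) := by
    rw [Real.rpow_def_of_pos hm, mul_comm]
  have h2 : u ^ (-p) = Real.exp (-p * Real.log u) := by
    rw [Real.rpow_def_of_pos hu, mul_comm]
  have h3 : v ^ (-p) = Real.exp (-p * Real.log v) := by
    rw [Real.rpow_def_of_pos hv, mul_comm]
  have hstep : Real.exp (-p * Real.log ((u + v) / 2))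
      < Real.exp ((-p * Real.log u + -p * Real.log v) / 2) := by
    apply Real.exp_lt_exp.2
    nlinarith [hlog, hp]
  rw [h1, h2, h3]
  nlinarith [hexp, hstep]

theorem stmt_4 (y a b n : ℝ) (hy : 0 < y) (ha : 0 < a) (hab : a < b) (hn : 0 < n) :
    (y + a) ^ (-n) - (y + b) ^ (-n) > (b - a) * n * (y + (a + b) / 2) ^ (-n - 1) := by
  set c : ℝ := y + (a + b) / 2 with hc
  set h : ℝ := (b - a) / 2 with hh
  have hh0 : 0 < h := by simp [hh]; linarith
  have hch : h < c := by simp [hc, hh]; linarith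
  have hya : y + a = c - h := by simp [hc, hh]; ring
  have hyb : y + b = c + h := by simp [hc, hh]; ring
  set G : ℝ → ℝ := fun t => (c - t) ^ (-n) - (c + t) ^ (-n) - 2 * t * n * c ^ (-n - 1) with hG
  -- derivative of G
  have hderiv : ∀ t ∈ Ioo (0:ℝ) h, HasDerivAt G
      (n * (c - t) ^ (-n - 1) + n * (c + t) ^ (-n - 1) - 2 * n * c ^ (-n - 1)) t := by
    intro t ht
    have h1 : 0 < c - t := by cases ht with | intro h1 h2 => linarith
    have h2 : 0 < c + t := by cases ht with | intro h1 h2 => linarith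
    have d1 : HasDerivAt (fun t : ℝ => (c - t) ^ (-n)) ((-1) * (-n) * (c - t) ^ (-n - 1)) t := by
      have := ((hasDerivAt_id t).const_sub c).rpow_const (p := -n) (Or.inl h1.ne')
      simpa using this
    have d2 : HasDerivAt (fun t : ℝ => (c + t) ^ (-n)) (1 * (-n) * (c + t) ^ (-n - 1)) t := by
      have := ((hasDerivAt_id t).const_add c).rpow_const (p := -n) (Or.inl h2.ne')
      simpa using this
    have d3 : HasDerivAt (fun t : ℝ => 2 * t * n * c ^ (-n - 1)) (2 * n * c ^ (-n - 1)) t := by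
      have := (((hasDerivAt_id t).const_mul 2).mul_const n).mul_const (c ^ (-n - 1))
      refine this.congr_deriv ?_
      ring
    have := (d1.sub d2).sub d3
    refine this.congr_deriv ?_
    ring
  have hderivpos : ∀ t ∈ Ioo (0:ℝ) h,
      0 < n * (c - t) ^ (-n - 1) + n * (c + t) ^ (-n - 1) - 2 * n * c ^ (-n - 1) := by
    intro t ht
    obtain ⟨ht0, hth⟩ := ht
    have h1 : 0 < c - t := by linarith
    have h2 : 0 < c + t := by linarith
    have key := midpoint_rpow_lt (n + 1) (c - t) (c + t) (by linarith) h1 h2 (by intro he; linarith)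
    have hmid : ((c - t) + (c + t)) / 2 = c := by ring
    rw [hmid] at key
    have e1 : (-(n + 1) : ℝ) = -n - 1 := by ring
    rw [e1] at key
    nlinarith [key, hn]
  -- continuity of G on Icc 0 h
  have hcont : ContinuousOn G (Icc 0 h) := by
    apply ContinuousOn.sub
    apply ContinuousOn.sub
    · apply ContinuousOn.rpow_const (by fun_prop)
      intro t ht
      left
      obtain ⟨ht0, hth⟩ := ht
      have : 0 < c - t := by linarith
      exact this.ne'
    · apply ContinuousOn.rpow_const (by fun_prop)
      intro t ht
      left
      obtain ⟨ht0, hth⟩ := ht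
      have : 0 < c + t := by linarith
      exact this.ne'
    · fun_prop
  have hmono : StrictMonoOn G (Icc 0 h) := by
    apply strictMonoOn_of_deriv_pos (convex_Icc 0 h) hcont
    intro t ht
    rw [interior_Icc] at ht
    rw [(hderiv t ht).deriv]
    exact hderivpos t ht
  have h0 : G 0 = 0 := by simp [hG]
  have hgoal : G 0 < G h := hmono (left_mem_Icc.2 hh0.le) (right_mem_Icc.2 hh0.le) hh0
  rw [h0] at hgoal
  have : 0 < (c - h) ^ (-n) - (c + h) ^ (-n) - 2 * h * n * c ^ (-n - 1) := hgoal
  rw [hya, hyb]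
  have hba : b - a = 2 * h := by rw [hh]; ring
  rw [hba]
  linarith
end

section
/- For 0 < s < 1, the function F(x) = ((x+s)/(x+1))·exp((1-s)/(x+√s)) is strictly decreasing on (0,∞), and F(x) > 1 for all x > 0. -/
theorem stmt_5 (s : ℝ) (hs0 : 0 < s) (hs1 : s < 1) :
    StrictAntiOn (fun x : ℝ => ((x + s) / (x + 1)) * Real.exp ((1 - s) / (x + Real.sqrt s)))
      (Set.Ioi (0 : ℝ)) ∧
    ∀ x : ℝ, 0 < x → ((x + s) / (x + 1)) * Real.exp ((1 - s) / (x + Real.sqrt s)) > 1 := by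
  set a := Real.sqrt s with ha_def
  have ha0 : 0 < a := Real.sqrt_pos.mpr hs0
  have ha1 : a < 1 := by
    rw [ha_def, show (1:ℝ) = Real.sqrt 1 by simp]
    exact Real.sqrt_lt_sqrt hs0.le hs1
  have has : a ^ 2 = s := Real.sq_sqrt hs0.le
  set F : ℝ → ℝ := fun x => ((x + s) / (x + 1)) * Real.exp ((1 - s) / (x + a)) with hF
  set D : ℝ → ℝ := fun x =>
    ((1 * (x + 1) - (x + s) * 1) / (x + 1) ^ 2) * Real.exp ((1 - s) / (x + a))
    + ((x + s) / (x + 1)) * (Real.exp ((1 - s) / (x + a)) *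
        ((0 * (x + a) - (1 - s) * 1) / (x + a) ^ 2)) with hD
  have key : ∀ x ∈ Set.Ioi (0:ℝ), HasDerivAt F (D x) x ∧ D x < 0 := by
    intro x hx
    have hx0 : (0:ℝ) < x := hx
    have hx1 : (0:ℝ) < x + 1 := by linarith
    have hxa : (0:ℝ) < x + a := by linarith
    constructor
    · have hg : HasDerivAt (fun x : ℝ => (x + s) / (x + 1))
          ((1 * (x + 1) - (x + s) * 1) / (x + 1) ^ 2) x :=
        ((hasDerivAt_id x).add_const s).div ((hasDerivAt_id x).add_const 1) hx1.ne'
      have hh : HasDerivAt (fun x : ℝ => (1 - s) / (x + a))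
          ((0 * (x + a) - (1 - s) * 1) / (x + a) ^ 2) x :=
        (hasDerivAt_const x (1 - s)).div ((hasDerivAt_id x).add_const a) hxa.ne'
      exact hg.mul hh.exp
    · have hrw : D x = Real.exp ((1 - s) / (x + a)) *
          (((1 - s) * ((x + a) ^ 2 - (x + s) * (x + 1))) / ((x + 1) ^ 2 * (x + a) ^ 2)) := by
        rw [hD]
        field_simp
        ring
      rw [hrw]
      apply mul_neg_of_pos_of_neg (Real.exp_pos _)
      apply div_neg_of_neg_of_pos _ (by positivity)
      have h2 : (x + a) ^ 2 - (x + s) * (x + 1) = -(x * (1 - a) ^ 2) := by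
        rw [← has]; ring
      rw [h2]
      have h3 : 0 < x * (1 - a) ^ 2 :=
        mul_pos hx0 (pow_pos (by linarith) 2)
      nlinarith
  have anti : StrictAntiOn F (Set.Ioi (0:ℝ)) := by
    apply strictAntiOn_of_deriv_neg (convex_Ioi 0)
    · exact fun x hx => ((key x hx).1).differentiableAt.continuousAt.continuousWithinAt
    · intro x hx
      rw [interior_Ioi] at hx
      rw [(key x hx).1.deriv]
      exact (key x hx).2
  refine ⟨anti, fun x hx => ?_⟩
  -- limit at infinity is 1
  have t0 : Filter.Tendsto (fun x : ℝ => x + 1) Filter.atTop Filter.atTop :=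
    Filter.tendsto_atTop_add_const_right _ 1 Filter.tendsto_id
  have t0a : Filter.Tendsto (fun x : ℝ => x + a) Filter.atTop Filter.atTop :=
    Filter.tendsto_atTop_add_const_right _ a Filter.tendsto_id
  have tg : Filter.Tendsto (fun x : ℝ => (x + s) / (x + 1)) Filter.atTop (nhds 1) := by
    have h1 : Filter.Tendsto (fun x : ℝ => 1 + (s - 1) / (x + 1)) Filter.atTop (nhds 1) := by
      have := t0.const_div_atTop (s - 1)
      simpa using Filter.Tendsto.const_add 1 this
    refine h1.congr' ?_
    filter_upwards [Filter.eventually_gt_atTop 0] with y hy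
    have : y + 1 ≠ 0 := by linarith
    field_simp
    ring
  have te : Filter.Tendsto (fun x : ℝ => Real.exp ((1 - s) / (x + a))) Filter.atTop (nhds 1) := by
    have h1 : Filter.Tendsto (fun x : ℝ => (1 - s) / (x + a)) Filter.atTop (nhds 0) :=
      t0a.const_div_atTop (1 - s)
    have := (Real.continuous_exp.tendsto 0).comp h1
    simpa [Function.comp_def] using this
  have T : Filter.Tendsto F Filter.atTop (nhds 1) := by
    have := tg.mul te
    simpa using this
  have h1 : F (x + 1) < F x :=
    anti (Set.mem_Ioi.mpr hx) (Set.mem_Ioi.mpr (by linarith)) (lt_add_one x)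
  have h2 : (1:ℝ) ≤ F (x + 1) := by
    refine le_of_tendsto T ?_
    filter_upwards [Filter.eventually_ge_atTop (x + 1)] with y hy
    rcases eq_or_lt_of_le hy with h | h
    · exact le_of_eq (congrArg F h.symm)
    · exact (anti (Set.mem_Ioi.mpr (by linarith)) (Set.mem_Ioi.mpr (by linarith)) h).le
  show F x > 1
  linarith
end

section
/- For 0 < s < 1, the function F(x) = ((x+s)/(x+1))·exp((1-s)/(x+(s+1)/2)) is strictly increasing on (0,∞), and F(x) < 1 for all x > 0. -/
theorem stmt_6 (s : ℝ) (hs0 : 0 < s) (hs1 : s < 1) :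
    StrictMonoOn (fun x : ℝ => ((x + s) / (x + 1)) * Real.exp ((1 - s) / (x + (s + 1) / 2)))
      (Set.Ioi (0 : ℝ)) ∧
    ∀ x : ℝ, 0 < x → ((x + s) / (x + 1)) * Real.exp ((1 - s) / (x + (s + 1) / 2)) < 1 := by
  set m : ℝ := (s + 1) / 2 with hm
  have hm0 : 0 < m := by positivity
  set g : ℝ → ℝ := fun x => Real.log (x + s) - Real.log (x + 1) + (1 - s) / (x + m) with hg
  -- positivity facts
  have hxs : ∀ x : ℝ, 0 < x → 0 < x + s := fun x hx => by linarith
  have hx1 : ∀ x : ℝ, 0 < x → 0 < x + 1 := fun x hx => by linarith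
  have hxm : ∀ x : ℝ, 0 < x → 0 < x + m := fun x hx => by linarith
  -- F = exp ∘ g on Ioi 0
  have hF : ∀ x : ℝ, 0 < x →
      ((x + s) / (x + 1)) * Real.exp ((1 - s) / (x + m)) = Real.exp (g x) := by
    intro x hx
    rw [hg]
    simp only
    rw [Real.exp_add, Real.exp_sub, Real.exp_log (hxs x hx), Real.exp_log (hx1 x hx)]
  -- g strictly mono on Ioi 0
  have hderiv : ∀ x : ℝ, 0 < x → HasDerivAt g
      ((x + s)⁻¹ - (x + 1)⁻¹ + (1 - s) * (-(1) / (x + m) ^ 2)) x := by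
    intro x hx
    have h1 : HasDerivAt (fun x : ℝ => Real.log (x + s)) (x + s)⁻¹ x := by
      simpa [Function.comp_def] using (Real.hasDerivAt_log (hxs x hx).ne').comp x
        ((hasDerivAt_id x).add_const s)
    have h2 : HasDerivAt (fun x : ℝ => Real.log (x + 1)) (x + 1)⁻¹ x := by
      simpa [Function.comp_def] using (Real.hasDerivAt_log (hx1 x hx).ne').comp x
        ((hasDerivAt_id x).add_const 1)
    have h3 : HasDerivAt (fun x : ℝ => (x + m)⁻¹) (-(1) / (x + m) ^ 2) x := by
      simpa [Pi.inv_def] using ((hasDerivAt_id x).add_const m).inv (hxm x hx).ne'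
    have h4 : HasDerivAt (fun x : ℝ => (1 - s) / (x + m))
        ((1 - s) * (-(1) / (x + m) ^ 2)) x := by
      simpa [div_eq_mul_inv] using h3.const_mul (1 - s)
    exact (h1.sub h2).add h4
  have hdpos : ∀ x : ℝ, 0 < x →
      0 < (x + s)⁻¹ - (x + 1)⁻¹ + (1 - s) * (-(1) / (x + m) ^ 2) := by
    intro x hx
    have hs' := hxs x hx
    have h1' := hx1 x hx
    have hm' := hxm x hx
    rw [div_eq_mul_inv]
    have key : (x + s) * (x + 1) < (x + m) ^ 2 := by
      have : (x + m) ^ 2 - (x + s) * (x + 1) = (1 - s) ^ 2 / 4 := by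
        rw [hm]; ring
      nlinarith [sq_nonneg (1 - s)]
    have e1 : (x + s)⁻¹ - (x + 1)⁻¹ = (1 - s) / ((x + s) * (x + 1)) := by
      field_simp; ring
    rw [e1]
    have h2 : (1 - s) / (x + m) ^ 2 < (1 - s) / ((x + s) * (x + 1)) := by
      apply div_lt_div_of_pos_left (by linarith) (by positivity) key
    have : (1 - s) * (-(1) * ((x + m) ^ 2)⁻¹) = -((1 - s) / (x + m) ^ 2) := by
      ring
    rw [this]
    linarith
  have hgmono : StrictMonoOn g (Set.Ioi (0 : ℝ)) := by
    apply strictMonoOn_of_deriv_pos (convex_Ioi 0)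
    · intro x hx
      exact ((hderiv x hx).continuousAt).continuousWithinAt
    · intro x hx
      rw [interior_Ioi] at hx
      rw [(hderiv x hx).deriv]
      exact hdpos x hx
  -- g tends to 0 at top
  have hglim : Filter.Tendsto g Filter.atTop (nhds 0) := by
    have h1 : Filter.Tendsto (fun x : ℝ => (s - 1) / (x + 1)) Filter.atTop (nhds 0) :=
      Filter.Tendsto.div_atTop tendsto_const_nhds
        (Filter.tendsto_atTop_add_const_right _ 1 Filter.tendsto_id)
    have h2 : Filter.Tendsto (fun x : ℝ => (1 - s) / (x + m)) Filter.atTop (nhds 0) :=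
      Filter.Tendsto.div_atTop tendsto_const_nhds
        (Filter.tendsto_atTop_add_const_right _ m Filter.tendsto_id)
    have h3 : Filter.Tendsto (fun x : ℝ => Real.log (1 + (s - 1) / (x + 1)))
        Filter.atTop (nhds 0) := by
      have : Filter.Tendsto (fun x : ℝ => 1 + (s - 1) / (x + 1)) Filter.atTop (nhds 1) := by
        simpa using (tendsto_const_nhds (x := (1:ℝ))).add h1
      have hc : ContinuousAt Real.log 1 := Real.continuousAt_log one_ne_zero
      simpa [Function.comp_def] using hc.tendsto.comp this
    have heq : ∀ᶠ x : ℝ in Filter.atTop,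
        Real.log (1 + (s - 1) / (x + 1)) + (1 - s) / (x + m) = g x := by
      filter_upwards [Filter.eventually_gt_atTop 0] with x hx
      have h1' := hx1 x hx
      have : 1 + (s - 1) / (x + 1) = (x + s) / (x + 1) := by field_simp; ring
      rw [hg]
      simp only
      rw [this, Real.log_div (hxs x hx).ne' h1'.ne']
    have := h3.add h2
    simpa using this.congr' heq
  -- g ≤ 0 on Ioi 0
  have hgle : ∀ x : ℝ, 0 < x → g x ≤ 0 := by
    intro x hx
    refine ge_of_tendsto hglim ?_
    filter_upwards [Filter.eventually_ge_atTop (max x 1)] with y hy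
    have hy1 : x ≤ y := le_trans (le_max_left _ _) hy
    have hy0 : 0 < y := lt_of_lt_of_le one_pos (le_trans (le_max_right _ _) hy)
    exact hgmono.monotoneOn hx hy0 hy1
  have hglt : ∀ x : ℝ, 0 < x → g x < 0 := by
    intro x hx
    have h1 := hgmono hx (Set.mem_Ioi.2 (by linarith : (0:ℝ) < x + 1)) (by linarith)
    exact lt_of_lt_of_le h1 (hgle (x + 1) (by linarith))
  constructor
  · intro x hx y hy hxy
    simp only
    rw [hF x hx, hF y hy]
    exact Real.exp_lt_exp.2 (hgmono hx hy hxy)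
  · intro x hx
    rw [hF x hx]
    calc Real.exp (g x) < Real.exp 0 := Real.exp_lt_exp.2 (hglt x hx)
    _ = 1 := Real.exp_zero
end

section
/- For 0 ≤ s ≤ 1, the function x ↦ (Γ(x+s)/Γ(x+1))·exp((1-s)·ψ(x+(s+1)/2)) is completely monotonic on (0,∞), i.e., (-1)^n f^(n)(x) ≥ 0 for all n ≥ 0 and x > 0. -/
open Real Set Filter Finset Nat

lemma sum_base : Summable (fun k : ℕ => (((k:ℝ)+1)^2)⁻¹) := by
  have h : Summable (fun n : ℕ => 1 / ((n:ℝ))^2) := by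
    rw [Real.summable_one_div_nat_pow]; norm_num
  have := (summable_nat_add_iff 1).mpr h
  refine this.congr fun k => ?_
  push_cast; rw [one_div]

lemma lower_lin {b : ℝ} (hb : 0 < b) (k : ℕ) : min b 1 * ((k:ℝ)+1) ≤ b + k := by
  rcases le_total b 1 with h | h
  · rw [min_eq_left h]
    have : (0:ℝ) ≤ k := Nat.cast_nonneg k
    nlinarith
  · rw [min_eq_right h]
    have : (0:ℝ) ≤ k := Nat.cast_nonneg k
    nlinarith

lemma inv_pow_bound {b z : ℝ} (hb : 0 < b) (k : ℕ) (hz : b + k ≤ z) {q : ℕ} (hq : 2 ≤ q) :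
    ((z)^q)⁻¹ ≤ ((min b 1)^q)⁻¹ * (((k:ℝ)+1)^2)⁻¹ := by
  have hm : 0 < min b 1 := lt_min hb one_pos
  have h1 : min b 1 * ((k:ℝ)+1) ≤ z := (lower_lin hb k).trans hz
  have hk1 : (0:ℝ) < (k:ℝ)+1 := by positivity
  have hz0 : 0 < z := lt_of_lt_of_le (by positivity) h1
  have h2 : (min b 1 * ((k:ℝ)+1))^q ≤ z^q := pow_le_pow_left₀ (by positivity) h1 q
  have h3 : (z^q)⁻¹ ≤ ((min b 1 * ((k:ℝ)+1))^q)⁻¹ := by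
    apply inv_anti₀ (by positivity) h2
  refine h3.trans ?_
  rw [mul_pow, mul_inv]
  apply mul_le_mul_of_nonneg_left _ (inv_nonneg.mpr (by positivity))
  apply inv_anti₀ (by positivity)
  exact pow_le_pow_right₀ (by linarith) hq

lemma summable_inv_pow_shift (c x : ℝ) (h : 0 < x + c) {q : ℕ} (hq : 2 ≤ q) :
    Summable (fun k : ℕ => ((x + c + (k:ℝ))^q)⁻¹) := by
  apply Summable.of_nonneg_of_le (fun k => by positivity)
    (fun k => inv_pow_bound h k le_rfl hq)
  exact sum_base.mul_left _

lemma two_amgm {a b c : ℝ} (ha : 0 < a) (hab : a * b = c^2) (hc : 0 ≤ c) :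
    2*c ≤ a + b := by nlinarith [sq_nonneg (a - c)]

lemma key_sum {u v : ℝ} (hu : 0 < u) (huv : u ≤ v) (p : ℕ) :
    (p:ℝ) * (Real.sqrt (u*v))^(p-1) ≤ ∑ i ∈ Finset.range p, v^i * u^(p-1-i) := by
  have hv : 0 < v := lt_of_lt_of_le hu huv
  set r := Real.sqrt (u*v) with hr
  have hr0 : 0 ≤ r := Real.sqrt_nonneg _
  have hr2 : r^2 = u*v := Real.sq_sqrt (by positivity)
  have key : ∀ i ∈ Finset.range p, 2 * r^(p-1) ≤ v^i * u^(p-1-i) + v^(p-1-i) * u^(p-1-(p-1-i)) := by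
    intro i hi
    rw [Finset.mem_range] at hi
    have hip : i ≤ p - 1 := Nat.le_sub_one_of_lt hi
    have h1 : p - 1 - (p-1-i) = i := by omega
    rw [h1]
    apply two_amgm (by positivity) _ (by positivity)
    have : v^i * u^(p-1-i) * (v^(p-1-i) * u^i) = (u*v)^(p-1) := by
      rw [mul_pow]
      rw [show v^i * u^(p-1-i) * (v^(p-1-i) * u^i) = (u^(p-1-i) * u^i) * (v^i * v^(p-1-i)) by ring]
      rw [← pow_add, ← pow_add]
      congr 2 <;> omega
    rw [this, ← hr2, ← pow_mul, pow_mul']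
  have h2 : 2 * ((p:ℝ) * r^(p-1)) ≤ 2 * ∑ i ∈ Finset.range p, v^i * u^(p-1-i) := by
    have := Finset.sum_le_sum key
    rw [Finset.sum_add_distrib] at this
    have hrefl : ∑ i ∈ Finset.range p, v^(p-1-i) * u^(p-1-(p-1-i))
        = ∑ i ∈ Finset.range p, v^i * u^(p-1-i) :=
      Finset.sum_range_reflect (fun i => v^i * u^(p-1-i)) p
    rw [hrefl] at this
    simp only [Finset.sum_const, Finset.card_range, nsmul_eq_mul] at this
    nlinarith [this]
  linarith

lemma key_ineq {u v : ℝ} (hu : 0 < u) (huv : u ≤ v) {p : ℕ} (hp : 1 ≤ p) :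
    (p:ℝ) * (v - u) * (((u+v)/2)^(p+1))⁻¹ ≤ (u^p)⁻¹ - (v^p)⁻¹ := by
  have hv : 0 < v := lt_of_lt_of_le hu huv
  set w : ℝ := (u+v)/2 with hw
  have hw0 : 0 < w := by positivity
  set r := Real.sqrt (u*v) with hr
  have hr0 : 0 < r := Real.sqrt_pos.mpr (by positivity)
  have hr2 : r^2 = u*v := Real.sq_sqrt (by positivity)
  have hrw : r ≤ w := by
    rw [hr, show w = Real.sqrt (w^2) from (Real.sqrt_sq hw0.le).symm]
    apply Real.sqrt_le_sqrt; nlinarith [sq_nonneg (u - v)]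
  -- polynomial inequality : p * (v-u) * u^p * v^p ≤ w^(p+1) * (v^p - u^p)
  have hS := key_sum hu huv p
  have hgeom : (∑ i ∈ Finset.range p, v^i * u^(p-1-i)) * (v - u) = v^p - u^p :=
    geom_sum₂_mul v u p
  have hwp : r^(p+1) ≤ w^(p+1) := pow_le_pow_left₀ hr0.le hrw _
  have hrr : r^(p+1) * r^(p-1) = r^(2*p) := by
    rw [← pow_add]; congr 1; omega
  have hpoly : (p:ℝ) * (v - u) * (u^p * v^p) ≤ w^(p+1) * (v^p - u^p) := by
    have h1 : (p:ℝ) * (v-u) * (u^p * v^p) = (p:ℝ) * (v - u) * r^(2*p) := by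
      rw [pow_mul, hr2, mul_pow]
    have h2 : (p:ℝ) * r^(p-1) * (v - u) ≤ (∑ i ∈ Finset.range p, v^i * u^(p-1-i)) * (v-u) :=
      mul_le_mul_of_nonneg_right hS (by linarith)
    rw [hgeom] at h2
    calc (p:ℝ) * (v - u) * (u^p * v^p) = r^(p+1) * ((p:ℝ) * r^(p-1) * (v-u)) := by
          rw [h1, ← hrr]; ring
      _ ≤ r^(p+1) * (v^p - u^p) := mul_le_mul_of_nonneg_left h2 (by positivity)
      _ ≤ w^(p+1) * (v^p - u^p) := by
          apply mul_le_mul_of_nonneg_right hwp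
          nlinarith [pow_le_pow_left₀ hu.le huv p]
  have hup : (0:ℝ) < u^p := by positivity
  have hvp : (0:ℝ) < v^p := by positivity
  have hwp1 : (0:ℝ) < w^(p+1) := by positivity
  rw [show (u^p)⁻¹ - (v^p)⁻¹ = (v^p - u^p) / (u^p * v^p) by field_simp]
  rw [show (p:ℝ) * (v - u) * (w^(p+1))⁻¹ = ((p:ℝ) * (v-u)) / w^(p+1) by ring]
  rw [div_le_div_iff₀ hwp1 (by positivity)]
  nlinarith [hpoly]

lemma hasDerivAt_inv_pow_c (c : ℝ) (p : ℕ) {x : ℝ} (h : 0 < x + c) :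
    HasDerivAt (fun y : ℝ => ((y + c)^(p+1))⁻¹) (-(((p:ℝ)+1) * ((x + c)^(p+2))⁻¹)) x := by
  have h1 : HasDerivAt (fun y : ℝ => y + c) 1 x := (hasDerivAt_id x).add_const c
  have h2 : HasDerivAt (fun y : ℝ => (y+c)^(p+1)) ((((p:ℕ)+1 : ℕ):ℝ) * (x+c)^p * 1) x := by
    simpa using h1.fun_pow (p+1)
  have h3 := h2.inv (by positivity)
  refine h3.congr_deriv (Eq.symm ?_)
  have e : ((x+c)^(p+1))^2 = (x+c)^(p+2) * (x+c)^p := by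
    rw [← pow_mul, ← pow_add]; congr 1; ring
  rw [e]
  push_cast
  field_simp

noncomputable def Dfun (s : ℝ) (n k : ℕ) (x : ℝ) : ℝ :=
  (n ! : ℝ) * ((x+((s:ℝ)+k))^(n+1))⁻¹ - (n ! : ℝ) * ((x+((1:ℝ)+k))^(n+1))⁻¹
    - (1-s) * ((n+1)! : ℝ) * ((x+((s+1)/2+(k:ℝ)))^(n+2))⁻¹

lemma hasDerivAt_Dfun {s : ℝ} (hs0 : 0 ≤ s) (n k : ℕ) {x : ℝ} (hx : 0 < x) :
    HasDerivAt (fun y => Dfun s n k y) (-(Dfun s (n+1) k x)) x := by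
  have hks : (0:ℝ) < x + ((s:ℝ)+k) := by positivity
  have hk1 : (0:ℝ) < x + ((1:ℝ)+k) := by positivity
  have hkm : (0:ℝ) < x + ((s+1)/2+(k:ℝ)) := by positivity
  have d1 := (hasDerivAt_inv_pow_c ((s:ℝ)+k) n hks).const_mul ((n ! : ℝ))
  have d2 := (hasDerivAt_inv_pow_c ((1:ℝ)+k) n hk1).const_mul ((n ! : ℝ))
  have d3 := (hasDerivAt_inv_pow_c ((s+1)/2+(k:ℝ)) (n+1) hkm).const_mul ((1-s) * ((n+1)! : ℝ))
  have := (d1.sub d2).sub d3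
  refine this.congr_deriv (Eq.symm ?_)
  unfold Dfun
  have e1 : ((n+1)! : ℝ) = ((n:ℝ)+1) * (n ! : ℝ) := by
    rw [Nat.factorial_succ]; push_cast; ring
  have e2 : ((n+2)! : ℝ) = ((n:ℝ)+2) * ((n+1)! : ℝ) := by
    rw [show n+2 = (n+1)+1 from rfl, Nat.factorial_succ]; push_cast; ring
  push_cast [e1, e2]
  ring_nf

lemma Dfun_nonneg {s : ℝ} (hs0 : 0 ≤ s) (hs1 : s ≤ 1) (n k : ℕ) {x : ℝ} (hx : 0 < x) :
    0 ≤ Dfun s n k x := by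
  have hu : (0:ℝ) < x + ((s:ℝ)+k) := by positivity
  have huv : x + ((s:ℝ)+k) ≤ x + ((1:ℝ)+k) := by linarith
  have hkey := key_ineq hu huv (p := n+1) (by omega)
  have hw : (x + ((s:ℝ)+k) + (x + ((1:ℝ)+k)))/2 = x+((s+1)/2+(k:ℝ)) := by ring
  rw [hw] at hkey
  have hsub : x + ((1:ℝ)+k) - (x + ((s:ℝ)+k)) = 1 - s := by ring
  rw [hsub] at hkey
  have hfac : (0:ℝ) < (n ! : ℝ) := by exact_mod_cast Nat.factorial_pos n
  have e1 : ((n+1)! : ℝ) = ((n:ℝ)+1) * (n ! : ℝ) := by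
    rw [Nat.factorial_succ]; push_cast; ring
  unfold Dfun
  rw [e1]
  push_cast at hkey ⊢
  nlinarith [hkey, hfac]

lemma summable_Dfun {s : ℝ} (hs0 : 0 ≤ s) (hs1 : s ≤ 1) (n : ℕ) {x : ℝ} (hx : 0 < x) :
    Summable (fun k : ℕ => Dfun s n k x) := by
  cases n with
  | zero =>
    have h1 : Summable (fun k : ℕ => ((x+s+(k:ℝ))⁻¹ - (x+1+(k:ℝ))⁻¹)) := by
      have hb : Summable (fun k : ℕ => (1-s) * ((x+s+(k:ℝ))^2)⁻¹) :=
        (summable_inv_pow_shift s x (by positivity) le_rfl).mul_left _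
      refine Summable.of_nonneg_of_le ?_ ?_ hb
      · intro k
        have h1 : (0:ℝ) < x+s+(k:ℝ) := by positivity
        have h2 : x+s+(k:ℝ) ≤ x+1+(k:ℝ) := by linarith
        simp only [sub_nonneg]
        exact inv_anti₀ h1 h2
      · intro k
        have h1 : (0:ℝ) < x+s+(k:ℝ) := by positivity
        have h2 : (0:ℝ) < x+1+(k:ℝ) := by positivity
        rw [inv_sub_inv (ne_of_gt h1) (ne_of_gt h2)]
        rw [show x+1+(k:ℝ) - (x+s+(k:ℝ)) = 1 - s by ring]
        rw [div_eq_mul_inv]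
        apply mul_le_mul_of_nonneg_left _ (by linarith)
        apply inv_anti₀ (by positivity)
        nlinarith
    have h2 : Summable (fun k : ℕ => (1-s) * (1! : ℝ) * ((x+(s+1)/2+(k:ℝ))^2)⁻¹) :=
      (summable_inv_pow_shift ((s+1)/2) x (by positivity) le_rfl).mul_left _
    refine (h1.sub h2).congr fun k => ?_
    unfold Dfun
    norm_num [Nat.factorial]
    ring_nf
  | succ m =>
    have h1 : Summable (fun k : ℕ => ((m+1)! : ℝ) * ((x+s+(k:ℝ))^(m+2))⁻¹) :=
      (summable_inv_pow_shift s x (by positivity) (by omega)).mul_left _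
    have h2 : Summable (fun k : ℕ => ((m+1)! : ℝ) * ((x+1+(k:ℝ))^(m+2))⁻¹) :=
      (summable_inv_pow_shift 1 x (by positivity) (by omega)).mul_left _
    have h3 : Summable (fun k : ℕ => (1-s) * ((m+2)! : ℝ) * ((x+(s+1)/2+(k:ℝ))^(m+3))⁻¹) :=
      (summable_inv_pow_shift ((s+1)/2) x (by positivity) (by omega)).mul_left _
    refine ((h1.sub h2).sub h3).congr fun k => ?_
    unfold Dfun
    push_cast
    ring_nf
noncomputable def Tfun (s : ℝ) (n : ℕ) (x : ℝ) : ℝ := ∑' k : ℕ, Dfun s n k x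

lemma Tfun_nonneg {s : ℝ} (hs0 : 0 ≤ s) (hs1 : s ≤ 1) (n : ℕ) {x : ℝ} (hx : 0 < x) :
    0 ≤ Tfun s n x :=
  tsum_nonneg fun k => Dfun_nonneg hs0 hs1 n k hx

lemma Dfun_abs_le {s : ℝ} (hs0 : 0 ≤ s) (hs1 : s ≤ 1) (n k : ℕ) {x y : ℝ} (hx : 0 < x)
    (hy : x/2 ≤ y) :
    |Dfun s (n+1) k y| ≤ (((n+1)! : ℝ) * ((min (x/2+s) 1)^(n+2))⁻¹
      + ((n+1)! : ℝ) * ((min (x/2+1) 1)^(n+2))⁻¹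
      + (1-s) * ((n+2)! : ℝ) * ((min (x/2+(s+1)/2) 1)^(n+3))⁻¹) * (((k:ℝ)+1)^2)⁻¹ := by
  have hx2 : (0:ℝ) < x/2 := by positivity
  have hy0 : (0:ℝ) < y := lt_of_lt_of_le hx2 hy
  have b1 : (0:ℝ) < x/2 + s := by positivity
  have b2 : (0:ℝ) < x/2 + 1 := by positivity
  have b3 : (0:ℝ) < x/2 + (s+1)/2 := by positivity
  have z1 : x/2 + s + (k:ℝ) ≤ y + ((s:ℝ)+k) := by linarith
  have z2 : x/2 + 1 + (k:ℝ) ≤ y + ((1:ℝ)+k) := by linarith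
  have z3 : x/2 + (s+1)/2 + (k:ℝ) ≤ y + ((s+1)/2+(k:ℝ)) := by linarith
  have e1 := inv_pow_bound b1 k z1 (q := n+2) (by omega)
  have e2 := inv_pow_bound b2 k z2 (q := n+2) (by omega)
  have e3 := inv_pow_bound b3 k z3 (q := n+3) (by omega)
  have hf1 : (0:ℝ) ≤ ((n+1)! : ℝ) := by positivity
  have hf3 : (0:ℝ) ≤ (1-s) * ((n+2)! : ℝ) := by
    apply mul_nonneg (by linarith) (by positivity)
  unfold Dfun
  have tri : ∀ a b c : ℝ, |a - b - c| ≤ |a| + |b| + |c| := fun a b c => by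
    calc |a - b - c| ≤ |a - b| + |c| := abs_sub _ _
      _ ≤ |a| + |b| + |c| := by have := abs_sub a b; linarith
  refine (tri _ _ _).trans ?_
  have hp1 : (0:ℝ) < y + ((s:ℝ)+k) := by positivity
  have hp2 : (0:ℝ) < y + ((1:ℝ)+k) := by positivity
  have hp3 : (0:ℝ) < y + ((s+1)/2+(k:ℝ)) := by positivity
  rw [abs_of_nonneg (by positivity), abs_of_nonneg (by positivity), abs_of_nonneg (by positivity)]
  rw [add_mul, add_mul]
  have t1 := mul_le_mul_of_nonneg_left e1 hf1
  have t2 := mul_le_mul_of_nonneg_left e2 hf1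
  have t3 := mul_le_mul_of_nonneg_left e3 hf3
  push_cast at t1 t2 t3 ⊢
  ring_nf at t1 t2 t3 ⊢
  linarith [t1, t2, t3]
lemma hasDerivAt_Tfun {s : ℝ} (hs0 : 0 ≤ s) (hs1 : s ≤ 1) (n : ℕ) {x : ℝ} (hx : 0 < x) :
    HasDerivAt (Tfun s n) (-(Tfun s (n+1) x)) x := by
  have hx2 : (0:ℝ) < x/2 := by positivity
  set C : ℝ := ((n+1)! : ℝ) * ((min (x/2+s) 1)^(n+2))⁻¹
      + ((n+1)! : ℝ) * ((min (x/2+1) 1)^(n+2))⁻¹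
      + (1-s) * ((n+2)! : ℝ) * ((min (x/2+(s+1)/2) 1)^(n+3))⁻¹ with hC
  have hu : Summable (fun k : ℕ => C * (((k:ℝ)+1)^2)⁻¹) := sum_base.mul_left C
  have hmem : x ∈ Ioi (x/2) := by simp only [Set.mem_Ioi]; linarith
  have hder := hasDerivAt_tsum_of_isPreconnected hu isOpen_Ioi isPreconnected_Ioi
    (g := fun k y => Dfun s n k y) (g' := fun k y => -(Dfun s (n+1) k y))
    (fun k y hy => hasDerivAt_Dfun hs0 n k (lt_trans hx2 hy))
    (fun k y hy => by
      rw [Real.norm_eq_abs, abs_neg]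
      exact Dfun_abs_le hs0 hs1 n k hx (le_of_lt hy))
    hmem (summable_Dfun hs0 hs1 n hx) hmem
  have : (∑' k : ℕ, -(Dfun s (n+1) k x)) = -(Tfun s (n+1) x) := by
    rw [tsum_neg]; rfl
  rw [this] at hder
  exact hder

noncomputable def Phi (y : ℝ) : ℝ := ∑' k : ℕ, (((1:ℝ)+k)⁻¹ - (y+(k:ℝ))⁻¹)

noncomputable def Pfun (y : ℝ) : ℝ := ∑' k : ℕ, ((y+(k:ℝ))^2)⁻¹

lemma summable_Phi {y : ℝ} (hy : 0 < y) :
    Summable (fun k : ℕ => (((1:ℝ)+k)⁻¹ - (y+(k:ℝ))⁻¹)) := by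
  have hb : Summable (fun k : ℕ => (|y-1| * ((min y 1)⁻¹)) * (((k:ℝ)+1)^2)⁻¹) :=
    sum_base.mul_left _
  refine Summable.of_norm_bounded hb fun k => ?_
  have h1 : (0:ℝ) < 1+(k:ℝ) := by positivity
  have h2 : (0:ℝ) < y+(k:ℝ) := by positivity
  have hmin : 0 < min y 1 := lt_min hy one_pos
  rw [Real.norm_eq_abs, inv_sub_inv (ne_of_gt h1) (ne_of_gt h2)]
  rw [show y+(k:ℝ) - (1+(k:ℝ)) = y - 1 by ring, abs_div, abs_mul]
  rw [div_eq_mul_inv, mul_assoc]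
  apply mul_le_mul_of_nonneg_left _ (abs_nonneg _)
  rw [abs_of_pos h1, abs_of_pos h2, mul_inv]
  have hk1 : ((k:ℝ)+1) ≤ 1 + (k:ℝ) := by linarith
  have hk2 : min y 1 * ((k:ℝ)+1) ≤ y + (k:ℝ) := lower_lin hy k
  calc (1+(k:ℝ))⁻¹ * (y+(k:ℝ))⁻¹
      ≤ ((k:ℝ)+1)⁻¹ * (min y 1 * ((k:ℝ)+1))⁻¹ := by
        apply mul_le_mul (inv_anti₀ (by positivity) hk1)
          (inv_anti₀ (by positivity) hk2) (by positivity) (by positivity)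
    _ = (min y 1)⁻¹ * (((k:ℝ)+1)^2)⁻¹ := by
        rw [mul_inv, ← inv_pow]; ring
lemma summable_Pfun {y : ℝ} (hy : 0 < y) : Summable (fun k : ℕ => ((y+(k:ℝ))^2)⁻¹) := by
  have := summable_inv_pow_shift y 0 (by linarith) (q := 2) le_rfl
  refine this.congr fun k => by norm_num

lemma hasDerivAt_Phi {y : ℝ} (hy : 0 < y) : HasDerivAt Phi (Pfun y) y := by
  have hy2 : (0:ℝ) < y/2 := by positivity
  have hu : Summable (fun k : ℕ => ((min (y/2) 1)^2)⁻¹ * (((k:ℝ)+1)^2)⁻¹) := sum_base.mul_left _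
  have hmem : y ∈ Ioi (y/2) := by simp only [Set.mem_Ioi]; linarith
  have hder := hasDerivAt_tsum_of_isPreconnected hu isOpen_Ioi isPreconnected_Ioi
    (g := fun (k:ℕ) z => ((1:ℝ)+k)⁻¹ - (z+(k:ℝ))⁻¹) (g' := fun k z => ((z+(k:ℝ))^2)⁻¹)
    (fun k z hz => by
      have hz0 : (0:ℝ) < z := lt_trans hy2 hz
      have h1 : HasDerivAt (fun w : ℝ => (w+(k:ℝ))) 1 z := (hasDerivAt_id z).add_const _
      have h2 := (h1.inv (by positivity)).const_sub ((1:ℝ)+k)⁻¹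
      convert h2 using 1
      · rfl
      field_simp)
    (fun k z hz => by
      rw [Real.norm_eq_abs, abs_of_nonneg (by positivity)]
      exact inv_pow_bound hy2 k (by simp only [Set.mem_Ioi] at hz; push_cast; linarith) le_rfl)
    hmem (summable_Phi hy) hmem
  exact hder
lemma hasDerivAt_logGamma {y : ℝ} (hy : 0 < y) :
    HasDerivAt (fun t => Real.log (Real.Gamma t)) (psi y) y := by
  have hd : DifferentiableAt ℝ (fun t => Real.log (Real.Gamma t)) y := by
    refine DifferentiableAt.log (Real.differentiableAt_Gamma fun m => ?_)
      (ne_of_gt (Real.Gamma_pos_of_pos hy))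
    have hm : -(m:ℝ) < y := lt_of_le_of_lt (neg_nonpos.mpr (Nat.cast_nonneg m)) hy
    exact (ne_of_lt hm).symm
  unfold psi
  exact hd.hasDerivAt

lemma psi_rec {y : ℝ} (hy : 0 < y) : psi (y+1) = psi y + y⁻¹ := by
  have h1 : HasDerivAt (fun t : ℝ => Real.log (Real.Gamma (t+1))) (psi (y+1)) y := by
    have := (hasDerivAt_logGamma (by linarith : (0:ℝ) < y + 1)).comp y
      ((hasDerivAt_id y).add_const 1)
    simpa [Function.comp_def] using this
  have h2 : HasDerivAt (fun t : ℝ => Real.log t + Real.log (Real.Gamma t)) (y⁻¹ + psi y) y :=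
    (Real.hasDerivAt_log (ne_of_gt hy)).add (hasDerivAt_logGamma hy)
  have heq : (fun t : ℝ => Real.log t + Real.log (Real.Gamma t))
      =ᶠ[nhds y] (fun t : ℝ => Real.log (Real.Gamma (t+1))) := by
    filter_upwards [eventually_gt_nhds hy] with t ht
    rw [Real.Gamma_add_one (ne_of_gt ht),
      Real.log_mul (ne_of_gt ht) (ne_of_gt (Real.Gamma_pos_of_pos ht))]
  have h3 := h2.congr_of_eventuallyEq heq.symm
  have := h1.unique h3
  linarith

lemma diffAt_logGamma {y : ℝ} (hy : 0 < y) :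
    DifferentiableAt ℝ (Real.log ∘ Real.Gamma) y :=
  (hasDerivAt_logGamma hy).differentiableAt

lemma psi_le_log {y : ℝ} (hy : 0 < y) : psi y ≤ Real.log y := by
  have h := Real.convexOn_log_Gamma.deriv_le_slope (Set.mem_Ioi.mpr hy)
    (Set.mem_Ioi.mpr (by linarith : (0:ℝ) < y + 1)) (by linarith) (diffAt_logGamma hy)
  have hslope : slope (Real.log ∘ Real.Gamma) y (y+1) = Real.log y := by
    rw [slope_def_field]
    simp only [Function.comp]
    rw [Real.Gamma_add_one (ne_of_gt hy),
      Real.log_mul (ne_of_gt hy) (ne_of_gt (Real.Gamma_pos_of_pos hy))]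
    field_simp
    ring
  rw [hslope] at h
  have : deriv (Real.log ∘ Real.Gamma) y = psi y := rfl
  linarith [h, this.symm.le]

lemma log_le_psi {y : ℝ} (hy : 0 < y) : Real.log y ≤ psi (y+1) := by
  have h := Real.convexOn_log_Gamma.slope_le_deriv (Set.mem_Ioi.mpr hy)
    (Set.mem_Ioi.mpr (by linarith : (0:ℝ) < y + 1)) (by linarith)
    (diffAt_logGamma (by linarith : (0:ℝ) < y+1))
  have hslope : slope (Real.log ∘ Real.Gamma) y (y+1) = Real.log y := by
    rw [slope_def_field]
    simp only [Function.comp]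
    rw [Real.Gamma_add_one (ne_of_gt hy),
      Real.log_mul (ne_of_gt hy) (ne_of_gt (Real.Gamma_pos_of_pos hy))]
    field_simp
    ring
  rw [hslope] at h
  have : deriv (Real.log ∘ Real.Gamma) (y+1) = psi (y+1) := rfl
  linarith [h, this.le]

lemma psi_add_nat {y : ℝ} (hy : 0 < y) (N : ℕ) :
    psi (y+N) = psi y + ∑ k ∈ Finset.range N, (y+(k:ℝ))⁻¹ := by
  induction N with
  | zero => simp
  | succ M ih =>
    have h1 : y + (M:ℝ) + 1 = y + ((M+1 : ℕ):ℝ) := by push_cast; ring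
    have h2 := psi_rec (by positivity : (0:ℝ) < y + (M:ℝ))
    rw [h1] at h2
    rw [h2, ih, Finset.sum_range_succ]
    ring

lemma log_diff_tendsto {a b : ℝ} (ha : 0 < a) (hb : 0 < b) :
    Filter.Tendsto (fun N : ℕ => Real.log (a+(N:ℝ)) - Real.log (b+(N:ℝ)))
      Filter.atTop (nhds 0) := by
  have hbn : ∀ N : ℕ, (0:ℝ) < b + N := fun N => by positivity
  have han : ∀ N : ℕ, (0:ℝ) < a + N := fun N => by positivity
  have h1 : Filter.Tendsto (fun N : ℕ => (b+(N:ℝ))) Filter.atTop Filter.atTop :=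
    tendsto_atTop_add_const_left _ _ tendsto_natCast_atTop_atTop
  have h2 : Filter.Tendsto (fun N : ℕ => (a-b) * (b+(N:ℝ))⁻¹) Filter.atTop (nhds 0) := by
    have := h1.inv_tendsto_atTop
    simpa using this.const_mul (a-b)
  have h3 : Filter.Tendsto (fun N : ℕ => (a+(N:ℝ))/(b+(N:ℝ))) Filter.atTop (nhds 1) := by
    have heq : ∀ N : ℕ, (a+(N:ℝ))/(b+(N:ℝ)) = 1 + (a-b) * (b+(N:ℝ))⁻¹ := by
      intro N; field_simp; ring
    simp_rw [heq]
    have := h2.const_add (1:ℝ)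
    simpa using this
  have h4 := (Real.continuousAt_log (by norm_num : (1:ℝ) ≠ 0)).tendsto.comp h3
  simp only [Real.log_one] at h4
  refine h4.congr fun N => ?_
  simp only [Function.comp]
  rw [Real.log_div (ne_of_gt (han N)) (ne_of_gt (hbn N))]

lemma psi_tail_tendsto {y1 y2 : ℝ} (h1 : 0 < y1) (h2 : 0 < y2) :
    Filter.Tendsto (fun N : ℕ => psi (y1+(N:ℝ)) - psi (y2+(N:ℝ))) Filter.atTop (nhds 0) := by
  rw [← Filter.tendsto_add_atTop_iff_nat 1]
  have lower := log_diff_tendsto h1 (by linarith : (0:ℝ) < y2+1)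
  have upper := log_diff_tendsto (by linarith : (0:ℝ) < y1+1) h2
  refine tendsto_of_tendsto_of_tendsto_of_le_of_le
    (g := fun N : ℕ => Real.log (y1+(N:ℝ)) - Real.log ((y2+1)+(N:ℝ)))
    (h := fun N : ℕ => Real.log ((y1+1)+(N:ℝ)) - Real.log (y2+(N:ℝ))) lower upper ?_ ?_
  · intro N
    simp only []
    push_cast
    have c0 : (0:ℝ) ≤ (N:ℝ) := Nat.cast_nonneg N
    have e2 : Real.log (y1+(N:ℝ)) ≤ psi ((y1+(N:ℝ))+1) := log_le_psi (by linarith)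
    have e3 : psi (y2+((N:ℝ)+1)) ≤ Real.log (y2+((N:ℝ)+1)) := psi_le_log (by linarith)
    rw [show (y1+(N:ℝ))+1 = y1+((N:ℝ)+1) by ring] at e2
    have l1 : Real.log (y2+1+(N:ℝ)) = Real.log (y2+((N:ℝ)+1)) := by ring_nf
    rw [l1]
    linarith
  · intro N
    simp only []
    push_cast
    have c0 : (0:ℝ) ≤ (N:ℝ) := Nat.cast_nonneg N
    have e2 : psi (y1+((N:ℝ)+1)) ≤ Real.log (y1+((N:ℝ)+1)) := psi_le_log (by linarith)
    have e3 : Real.log (y2+(N:ℝ)) ≤ psi ((y2+(N:ℝ))+1) := log_le_psi (by linarith)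
    rw [show (y2+(N:ℝ))+1 = y2+((N:ℝ)+1) by ring] at e3
    have l1 : Real.log (y1+1+(N:ℝ)) = Real.log (y1+((N:ℝ)+1)) := by ring_nf
    rw [l1]
    linarith

lemma psi_sub_eq_Phi_sub {y1 y2 : ℝ} (h1 : 0 < y1) (h2 : 0 < y2) :
    psi y2 - psi y1 = Phi y2 - Phi y1 := by
  have hs1 := summable_Phi h1
  have hs2 := summable_Phi h2
  have hs : Summable (fun k : ℕ => (y1+(k:ℝ))⁻¹ - (y2+(k:ℝ))⁻¹) := by
    refine (hs2.sub hs1).congr fun k => ?_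
    ring
  have hPhi : Phi y2 - Phi y1 = ∑' k : ℕ, ((y1+(k:ℝ))⁻¹ - (y2+(k:ℝ))⁻¹) := by
    unfold Phi
    rw [← Summable.tsum_sub hs2 hs1]
    congr 1; funext k; ring
  have hA : Filter.Tendsto (fun N : ℕ => ∑ k ∈ Finset.range N, ((y1+(k:ℝ))⁻¹ - (y2+(k:ℝ))⁻¹))
      Filter.atTop (nhds (Phi y2 - Phi y1)) := by
    rw [hPhi]
    exact hs.hasSum.tendsto_sum_nat
  have hB : Filter.Tendsto (fun N : ℕ => ∑ k ∈ Finset.range N, ((y1+(k:ℝ))⁻¹ - (y2+(k:ℝ))⁻¹))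
      Filter.atTop (nhds (psi y2 - psi y1)) := by
    have heq : ∀ N : ℕ, ∑ k ∈ Finset.range N, ((y1+(k:ℝ))⁻¹ - (y2+(k:ℝ))⁻¹)
        = (psi y2 - psi y1) + (psi (y1+(N:ℝ)) - psi (y2+(N:ℝ))) := by
      intro N
      have p1 := psi_add_nat h1 N
      have p2 := psi_add_nat h2 N
      rw [Finset.sum_sub_distrib]
      linarith [p1, p2]
    have := (psi_tail_tendsto h1 h2).const_add (psi y2 - psi y1)
    simp only [add_zero] at this
    exact Filter.Tendsto.congr (fun N => (heq N).symm) this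
  exact tendsto_nhds_unique hB hA
lemma hasDerivAt_psi {y : ℝ} (hy : 0 < y) : HasDerivAt psi (Pfun y) y := by
  have hev : psi =ᶠ[nhds y] (fun z => Phi z + (psi 1 - Phi 1)) := by
    filter_upwards [eventually_gt_nhds hy] with t ht
    have := psi_sub_eq_Phi_sub one_pos ht
    linarith
  exact ((hasDerivAt_Phi hy).add_const _).congr_of_eventuallyEq hev

lemma psi_sub_tsum {y1 y2 : ℝ} (h1 : 0 < y1) (h2 : 0 < y2) :
    psi y2 - psi y1 = ∑' k : ℕ, ((y1+(k:ℝ))⁻¹ - (y2+(k:ℝ))⁻¹) := by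
  rw [psi_sub_eq_Phi_sub h1 h2]
  have hs1 := summable_Phi h1
  have hs2 := summable_Phi h2
  unfold Phi
  rw [← Summable.tsum_sub hs2 hs1]
  exact tsum_congr fun k => by ring

lemma T0_eq {s : ℝ} (hs0 : 0 ≤ s) (hs1 : s ≤ 1) {x : ℝ} (hx : 0 < x) :
    psi (x+s) - psi (x+1) + (1-s) * Pfun (x+(s+1)/2) = -(Tfun s 0 x) := by
  have hxs : (0:ℝ) < x + s := by positivity
  have hx1 : (0:ℝ) < x + 1 := by positivity
  have hxm : (0:ℝ) < x + (s+1)/2 := by positivity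
  have SA : Summable (fun k : ℕ => ((x+s+(k:ℝ))⁻¹ - (x+1+(k:ℝ))⁻¹)) :=
    ((summable_Phi hx1).sub (summable_Phi hxs)).congr fun k => by ring
  have SB : Summable (fun k : ℕ => (((x+(s+1)/2)+(k:ℝ))^2)⁻¹) := summable_Pfun hxm
  have e : Tfun s 0 x = (∑' k : ℕ, ((x+s+(k:ℝ))⁻¹ - (x+1+(k:ℝ))⁻¹))
      - ((1-s) * ∑' k : ℕ, (((x+(s+1)/2)+(k:ℝ))^2)⁻¹) := by
    unfold Tfun
    rw [← tsum_mul_left, ← Summable.tsum_sub SA (SB.mul_left _)]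
    refine tsum_congr fun k => ?_
    simp only [Dfun, Nat.factorial]
    push_cast
    ring_nf
  rw [e, ← psi_sub_tsum hxs hx1]
  have : Pfun (x+(s+1)/2) = ∑' k : ℕ, (((x+(s+1)/2)+(k:ℝ))^2)⁻¹ := rfl
  rw [this]
  ring

noncomputable def hfun (s : ℝ) (x : ℝ) : ℝ :=
  Real.log (Real.Gamma (x+s)) - Real.log (Real.Gamma (x+1)) + (1-s) * psi (x+(s+1)/2)

lemma hasDerivAt_hfun {s : ℝ} (hs0 : 0 ≤ s) (hs1 : s ≤ 1) {x : ℝ} (hx : 0 < x) :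
    HasDerivAt (hfun s) (-(Tfun s 0 x)) x := by
  have d1 : HasDerivAt (fun y : ℝ => Real.log (Real.Gamma (y+s))) (psi (x+s)) x := by
    have := (hasDerivAt_logGamma (show (0:ℝ) < x+s by positivity)).comp x
      ((hasDerivAt_id x).add_const s)
    simpa [Function.comp_def] using this
  have d2 : HasDerivAt (fun y : ℝ => Real.log (Real.Gamma (y+1))) (psi (x+1)) x := by
    have := (hasDerivAt_logGamma (show (0:ℝ) < x+1 by positivity)).comp x
      ((hasDerivAt_id x).add_const 1)
    simpa [Function.comp_def] using this
  have d3 : HasDerivAt (fun y : ℝ => psi (y+(s+1)/2)) (Pfun (x+(s+1)/2)) x := by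
    have := (hasDerivAt_psi (show (0:ℝ) < x+(s+1)/2 by positivity)).comp x
      ((hasDerivAt_id x).add_const ((s+1)/2))
    simpa [Function.comp_def] using this
  have total := (d1.sub d2).add (d3.const_mul (1-s))
  have : HasDerivAt (hfun s) (psi (x+s) - psi (x+1) + (1-s) * Pfun (x+(s+1)/2)) x := by
    exact total
  rw [T0_eq hs0 hs1 hx] at this
  exact this
noncomputable def Gfun (s : ℝ) : ℕ → ℝ → ℝ
  | 0 => fun x => Real.exp (hfun s x)
  | (n+1) => fun x => ∑ k ∈ Finset.range (n+1),
      ((n.choose k : ℕ) : ℝ) * Tfun s k x * Gfun s (n-k) x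
  decreasing_by exact Nat.lt_succ_of_le (Nat.sub_le n k)

lemma Gfun_nonneg {s : ℝ} (hs0 : 0 ≤ s) (hs1 : s ≤ 1) :
    ∀ n : ℕ, ∀ {x : ℝ}, 0 < x → 0 ≤ Gfun s n x := by
  intro n
  induction n using Nat.strong_induction_on with
  | _ n ih =>
    match n with
    | 0 => intro x hx; simp only [Gfun]; positivity
    | (m+1) =>
      intro x hx
      simp only [Gfun]
      apply Finset.sum_nonneg
      intro k hk
      rw [Finset.mem_range] at hk
      exact mul_nonneg (mul_nonneg (Nat.cast_nonneg _) (Tfun_nonneg hs0 hs1 k hx))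
        (ih (m-k) (by omega) hx)

lemma pascal_sum (A B : ℕ → ℝ) (n : ℕ) :
    ∑ k ∈ Finset.range (n+1), ((n.choose k : ℕ):ℝ) * (A (k+1) * B (n-k) + A k * B (n-k+1))
      = ∑ k ∈ Finset.range (n+2), (((n+1).choose k : ℕ):ℝ) * (A k * B (n+1-k)) := by
  have hR : ∑ k ∈ Finset.range (n+2), (((n+1).choose k : ℕ):ℝ) * (A k * B (n+1-k))
      = (∑ j ∈ Finset.range (n+1), (((n+1).choose (j+1) : ℕ):ℝ) * (A (j+1) * B (n-j)))
        + A 0 * B (n+1) := by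
    rw [Finset.sum_range_succ' (fun k => (((n+1).choose k : ℕ):ℝ) * (A k * B (n+1-k))) (n+1)]
    simp [Nat.succ_sub_succ]
  have hsplit : ∀ j ∈ Finset.range (n+1), (((n+1).choose (j+1):ℕ):ℝ) * (A (j+1) * B (n-j))
      = ((n.choose j:ℕ):ℝ) * (A (j+1) * B (n-j)) + ((n.choose (j+1):ℕ):ℝ) * (A (j+1) * B (n-j)) := by
    intro j hj
    rw [Nat.choose_succ_succ]
    push_cast
    ring
  have hL2 : ∑ k ∈ Finset.range (n+1), ((n.choose k:ℕ):ℝ) * (A k * B (n-k+1))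
      = (∑ j ∈ Finset.range n, ((n.choose (j+1):ℕ):ℝ) * (A (j+1) * B (n-j))) + A 0 * B (n+1) := by
    have hc : ∀ k ∈ Finset.range (n+1), ((n.choose k:ℕ):ℝ) * (A k * B (n-k+1))
        = ((n.choose k:ℕ):ℝ) * (A k * B (n+1-k)) := by
      intro k hk
      rw [Finset.mem_range] at hk
      have : n - k + 1 = n + 1 - k := by omega
      rw [this]
    rw [Finset.sum_congr rfl hc,
        Finset.sum_range_succ' (fun k => ((n.choose k:ℕ):ℝ) * (A k * B (n+1-k))) n]
    simp [Nat.succ_sub_succ]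
  have hz : ∑ j ∈ Finset.range (n+1), ((n.choose (j+1):ℕ):ℝ) * (A (j+1) * B (n-j))
      = ∑ j ∈ Finset.range n, ((n.choose (j+1):ℕ):ℝ) * (A (j+1) * B (n-j)) := by
    rw [Finset.sum_range_succ]
    simp
  calc ∑ k ∈ Finset.range (n+1), ((n.choose k : ℕ):ℝ) * (A (k+1) * B (n-k) + A k * B (n-k+1))
      = (∑ k ∈ Finset.range (n+1), ((n.choose k:ℕ):ℝ) * (A (k+1) * B (n-k)))
        + ∑ k ∈ Finset.range (n+1), ((n.choose k:ℕ):ℝ) * (A k * B (n-k+1)) := by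
        rw [← Finset.sum_add_distrib]
        exact Finset.sum_congr rfl fun k _ => by ring
    _ = (∑ k ∈ Finset.range (n+1), ((n.choose k:ℕ):ℝ) * (A (k+1) * B (n-k)))
        + ((∑ j ∈ Finset.range (n+1), ((n.choose (j+1):ℕ):ℝ) * (A (j+1) * B (n-j))) + A 0 * B (n+1)) := by
        rw [hL2, hz]
    _ = ∑ k ∈ Finset.range (n+2), (((n+1).choose k : ℕ):ℝ) * (A k * B (n+1-k)) := by
        rw [hR, Finset.sum_congr rfl hsplit, Finset.sum_add_distrib]
        ring

lemma hasDerivAt_Gfun {s : ℝ} (hs0 : 0 ≤ s) (hs1 : s ≤ 1) :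
    ∀ n : ℕ, ∀ {x : ℝ}, 0 < x → HasDerivAt (Gfun s n) (-(Gfun s (n+1) x)) x := by
  intro n
  induction n using Nat.strong_induction_on with
  | _ n ih =>
    match n with
    | 0 =>
      intro x hx
      have h0 := (hasDerivAt_hfun hs0 hs1 hx).exp
      have e : Gfun s 0 = fun y => Real.exp (hfun s y) := by funext y; simp only [Gfun]
      rw [e]
      convert h0 using 1
      have e1 : Gfun s 1 x = Tfun s 0 x * Real.exp (hfun s x) := by simp [Gfun]
      rw [e1]
      ring
    | (m+1) =>
      intro x hx
      have hterm : ∀ k ∈ Finset.range (m+1),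
          HasDerivAt (fun y => ((m.choose k:ℕ):ℝ) * Tfun s k y * Gfun s (m-k) y)
            (((m.choose k:ℕ):ℝ) * ((-(Tfun s (k+1) x)) * Gfun s (m-k) x
              + Tfun s k x * (-(Gfun s (m-k+1) x)))) x := by
        intro k hk
        rw [Finset.mem_range] at hk
        have hT := hasDerivAt_Tfun hs0 hs1 k hx
        have hG := ih (m-k) (by omega) hx
        have hmul := (hT.mul hG).const_mul (((m.choose k:ℕ):ℝ))
        have efun : (fun y => ((m.choose k:ℕ):ℝ) * Tfun s k y * Gfun s (m-k) y)
            = (fun y => ((m.choose k:ℕ):ℝ) * (Tfun s k y * Gfun s (m-k) y)) := by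
          funext y; ring
        rw [efun]
        exact hmul
      have hsum := HasDerivAt.fun_sum hterm
      have e : Gfun s (m+1) = fun y => ∑ k ∈ Finset.range (m+1),
          ((m.choose k:ℕ):ℝ) * Tfun s k y * Gfun s (m-k) y := by
        funext y; simp only [Gfun]
      rw [e]
      refine hsum.congr_deriv (Eq.symm ?_)
      have hp := pascal_sum (fun k => Tfun s k x) (fun j => Gfun s j x) m
      have e2 : Gfun s (m+2) x = ∑ k ∈ Finset.range (m+2),
          (((m+1).choose k:ℕ):ℝ) * (Tfun s k x * Gfun s (m+1-k) x) := by
        simp only [Gfun]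
        exact Finset.sum_congr rfl fun k _ => by ring
      rw [show m+1+1 = m+2 from rfl, e2, ← hp, ← Finset.sum_neg_distrib]
      exact Finset.sum_congr rfl fun k _ => by ring

theorem stmt_7 (s : ℝ) (hs0 : 0 ≤ s) (hs1 : s ≤ 1) :
    ∀ n : ℕ, ∀ x : ℝ, 0 < x →
      0 ≤ (-1 : ℝ) ^ n *
        iteratedDeriv n
          (fun x => (Real.Gamma (x + s) / Real.Gamma (x + 1)) *
            Real.exp ((1 - s) * psi (x + (s + 1) / 2))) x := by
  have hf0 : ∀ x : ℝ, 0 < x →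
      (Real.Gamma (x + s) / Real.Gamma (x + 1)) * Real.exp ((1 - s) * psi (x + (s + 1) / 2))
        = Gfun s 0 x := by
    intro x hx
    have hG1 : (0:ℝ) < Real.Gamma (x+s) := Real.Gamma_pos_of_pos (by positivity)
    have hG2 : (0:ℝ) < Real.Gamma (x+1) := Real.Gamma_pos_of_pos (by positivity)
    have e : Gfun s 0 x = Real.exp (hfun s x) := by simp only [Gfun]
    rw [e]
    unfold hfun
    rw [Real.exp_add, Real.exp_sub, Real.exp_log hG1, Real.exp_log hG2]
  have key : ∀ n : ℕ, ∀ x : ℝ, 0 < x →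
      iteratedDeriv n (fun x => (Real.Gamma (x + s) / Real.Gamma (x + 1)) *
        Real.exp ((1 - s) * psi (x + (s + 1) / 2))) x = (-1:ℝ)^n * Gfun s n x := by
    intro n
    induction n with
    | zero =>
      intro x hx
      rw [iteratedDeriv_zero, pow_zero, one_mul]
      exact hf0 x hx
    | succ m ihm =>
      intro x hx
      rw [iteratedDeriv_succ]
      have hev : iteratedDeriv m (fun x => (Real.Gamma (x + s) / Real.Gamma (x + 1)) *
          Real.exp ((1 - s) * psi (x + (s + 1) / 2))) =ᶠ[nhds x]
          (fun y => (-1:ℝ)^m * Gfun s m y) := by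
        filter_upwards [eventually_gt_nhds hx] with t ht
        exact ihm t ht
      rw [hev.deriv_eq]
      have hd := ((hasDerivAt_Gfun hs0 hs1 m hx).const_mul ((-1:ℝ)^m)).deriv
      rw [hd]
      ring
  intro n x hx
  rw [key n x hx, ← mul_assoc, ← pow_add]
  rw [Even.neg_one_pow ⟨n, rfl⟩, one_mul]
  exact Gfun_nonneg hs0 hs1 n hx
end

section
/- For every x ≥ 0 and positive numbers s ≠ t, the inequality (1/(t-s))·∫ₛᵗ ψ(x+u) du < ψ(x + (s+t)/2) holds. -/
open Real Filter Set intervalIntegral MeasureTheory Topology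

namespace PsiAux

noncomputable def pn (n : ℕ) (y : ℝ) : ℝ :=
  Real.log n - ∑ m ∈ Finset.range (n + 1), 1 / (y + m)

noncomputable def aa (k : ℕ) (y : ℝ) : ℝ :=
  (Real.log ((k : ℝ) + 2) - Real.log ((k : ℝ) + 1)) - 1 / (y + ((k : ℝ) + 2))

lemma pn_succ (n : ℕ) (y : ℝ) :
    pn (n + 1) y = pn 1 y + ∑ k ∈ Finset.range n, aa k y := by
  induction n with
  | zero => simp
  | succ n ih =>
    rw [Finset.sum_range_succ, ← add_assoc, ← ih]
    simp only [pn, aa, Finset.sum_range_succ]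
    push_cast
    simp only [one_div]
    ring

lemma hasDerivAt_logGammaSeq (n : ℕ) {y : ℝ} (hy : 0 < y) :
    HasDerivAt (fun z => Real.BohrMollerup.logGammaSeq z n) (pn n y) y := by
  have h1 : HasDerivAt (fun z : ℝ => z * Real.log n + Real.log (Nat.factorial n : ℝ)) (Real.log n) y := by
    simpa using ((hasDerivAt_id y).mul_const (Real.log n)).add_const (Real.log (Nat.factorial n : ℝ))
  have h2 : HasDerivAt (fun z : ℝ => ∑ m ∈ Finset.range (n + 1), Real.log (z + m))
      (∑ m ∈ Finset.range (n + 1), 1 / (y + m)) y := by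
    refine HasDerivAt.fun_sum fun m _ => ?_
    have h := ((hasDerivAt_id y).add_const (m : ℝ)).log (by positivity)
    simpa using h
  have := h1.fun_sub h2
  simpa [Real.BohrMollerup.logGammaSeq, pn] using this

lemma pn_continuousOn (n : ℕ) (b : ℝ) : ContinuousOn (pn n) (Ioo 0 b) := by
  refine continuousOn_const.sub (continuousOn_finset_sum _ fun m _ => ?_)
  refine continuousOn_const.div (by fun_prop) fun y hy => ?_
  have : (0:ℝ) < y + m := by
    have := hy.1
    positivity
  exact this.ne'

lemma aux_concave {b : ℝ} (hb : 0 < b) (n : ℕ) :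
    ConcaveOn ℝ (Ioo 0 b) (fun y => pn (n + 1) y + (1 / b ^ 3) * y ^ 2) := by
  set c : ℝ := 1 / b ^ 3 with hc
  refine concaveOn_of_hasDerivWithinAt2_nonpos (f' := fun y =>
      (∑ m ∈ Finset.range (n + 2), 1 / (y + m) ^ 2) + 2 * c * y)
    (f'' := fun y => (-∑ m ∈ Finset.range (n + 2), 2 / (y + m) ^ 3) + 2 * c)
    (convex_Ioo 0 b) ?_ ?_ ?_ ?_
  · exact ((pn_continuousOn (n+1) b).add (by fun_prop))
  · rw [interior_Ioo]
    intro x hx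
    have hx0 := hx.1
    have hsum : HasDerivAt (fun y : ℝ => ∑ m ∈ Finset.range (n + 2), 1 / (y + m))
        (∑ m ∈ Finset.range (n + 2), -(1 / (x + m) ^ 2)) x := by
      refine HasDerivAt.fun_sum fun m _ => ?_
      have hne : x + (m : ℝ) ≠ 0 := by positivity
      have h := ((hasDerivAt_id x).add_const (m : ℝ)).fun_inv hne
      simpa [one_div, neg_div] using h
    have hsq : HasDerivAt (fun y : ℝ => c * y ^ 2) (2 * c * x) x := by
      have := (hasDerivAt_pow 2 x).const_mul c
      exact this.congr_deriv (by rw [show (2:ℕ) - 1 = 1 from rfl]; push_cast; ring)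
    have H := ((hasDerivAt_const x (Real.log ((n:ℝ)+1))).fun_sub hsum).fun_add hsq
    have hfun : (fun y : ℝ => Real.log ((n:ℝ)+1) - ∑ m ∈ Finset.range (n + 2), 1 / (y + m)
        + c * y ^ 2) = fun y => pn (n + 1) y + c * y ^ 2 := by
      funext y
      simp only [pn]
      push_cast
      simp only [one_div]
      try ring
    rw [hfun] at H
    have : (0 : ℝ) - ∑ m ∈ Finset.range (n + 2), -(1 / (x + m) ^ 2) + 2 * c * x
        = (∑ m ∈ Finset.range (n + 2), 1 / (x + m) ^ 2) + 2 * c * x := by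
      simp [Finset.sum_neg_distrib]
    exact (this ▸ H).hasDerivWithinAt
  · rw [interior_Ioo]
    intro x hx
    have hx0 := hx.1
    have hsum : HasDerivAt (fun y : ℝ => ∑ m ∈ Finset.range (n + 2), 1 / (y + m) ^ 2)
        (∑ m ∈ Finset.range (n + 2), -(2 / (x + m) ^ 3)) x := by
      refine HasDerivAt.fun_sum fun m _ => ?_
      have hpos : (0:ℝ) < x + m := by positivity
      have h1 : HasDerivAt (fun y : ℝ => (y + (m:ℝ)) ^ 2) (2 * (x + m)) x := by
        have := ((hasDerivAt_id x).add_const (m : ℝ)).pow 2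
        exact this.congr_deriv (by simp only [id_eq]; push_cast; ring)
      have h := h1.fun_inv (by positivity)
      have : -(2 * (x + (m:ℝ))) / ((x + m) ^ 2) ^ 2 = -(2 / (x + m) ^ 3) := by
        field_simp
      rw [this] at h
      simpa [one_div] using h
    have hlin : HasDerivAt (fun y : ℝ => 2 * c * y) (2 * c) x := by
      simpa using (hasDerivAt_id x).const_mul (2 * c)
    have H := hsum.add hlin
    have : (∑ m ∈ Finset.range (n + 2), -(2 / (x + m) ^ 3)) + 2 * c
        = (-∑ m ∈ Finset.range (n + 2), 2 / (x + m) ^ 3) + 2 * c := by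
      simp [Finset.sum_neg_distrib]
    exact (this ▸ H).hasDerivWithinAt
  · rw [interior_Ioo]
    intro x hx
    have hx0 := hx.1
    have hxb := hx.2
    have h1 : 2 / x ^ 3 ≤ ∑ m ∈ Finset.range (n + 2), 2 / (x + m) ^ 3 := by
      have := Finset.single_le_sum (f := fun m : ℕ => 2 / (x + (m:ℝ)) ^ 3)
        (fun m _ => by positivity) (Finset.mem_range.mpr (by omega : 0 < n + 2))
      simpa using this
    have h2 : 2 * c ≤ 2 / x ^ 3 := by
      rw [show 2 * c = 2 / b ^ 3 by rw [hc]; ring]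
      gcongr <;> first | exact hx0 | exact hxb.le
    linarith
lemma aa_bound {b : ℝ} (hb : 0 < b) (k : ℕ) {y : ℝ} (hy : y ∈ Ioo 0 b) :
    ‖aa k y‖ ≤ (b + 1) / ((k : ℝ) + 1) ^ 2 := by
  obtain ⟨hy0, hyb⟩ := hy
  set K : ℝ := (k : ℝ) with hK
  have hK0 : 0 ≤ K := Nat.cast_nonneg k
  have hk1 : (0:ℝ) < K + 1 := by linarith
  have hk2 : (0:ℝ) < K + 2 := by linarith
  have hyk : (0:ℝ) < y + (K + 2) := by linarith
  have hlogle : Real.log (K + 2) - Real.log (K + 1) ≤ 1 / (K + 1) := by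
    rw [← Real.log_div hk2.ne' hk1.ne']
    have h := Real.log_le_sub_one_of_pos (show (0:ℝ) < (K + 2)/(K + 1) by positivity)
    have : (K + 2)/(K + 1) - 1 = 1 / (K + 1) := by field_simp; norm_num
    linarith
  have hlogge : 1 / (K + 2) ≤ Real.log (K + 2) - Real.log (K + 1) := by
    have h := Real.log_le_sub_one_of_pos (show (0:ℝ) < (K + 1)/(K + 2) by positivity)
    rw [Real.log_div hk1.ne' hk2.ne'] at h
    have : (K + 1)/(K + 2) - 1 = -(1 / (K + 2)) := by field_simp; ring
    linarith
  have hnonneg : 0 ≤ aa k y := by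
    have : 1 / (y + (K + 2)) ≤ 1 / (K + 2) :=
      one_div_le_one_div_of_le hk2 (by linarith)
    simp only [aa, ← hK]
    linarith
  rw [Real.norm_eq_abs, abs_of_nonneg hnonneg]
  have h1 : 1 / (b + (K + 2)) ≤ 1 / (y + (K + 2)) :=
    one_div_le_one_div_of_le hyk (by linarith)
  have h2 : aa k y ≤ 1 / (K + 1) - 1 / (b + (K + 2)) := by
    simp only [aa, ← hK]
    linarith
  have h3 : 1 / (K + 1) - 1 / (b + (K + 2)) = (b + 1) / ((K + 1) * (b + (K + 2))) := by
    field_simp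
    ring
  have h4 : (b + 1) / ((K + 1) * (b + (K + 2))) ≤ (b + 1) / ((K + 1) ^ 2) := by
    gcongr (b + 1) / ?_ <;> nlinarith
  calc aa k y ≤ 1 / (K + 1) - 1 / (b + (K + 2)) := h2
    _ = (b + 1) / ((K + 1) * (b + (K + 2))) := h3
    _ ≤ (b + 1) / ((K + 1) ^ 2) := h4

lemma summable_u (b : ℝ) : Summable (fun k : ℕ => (b + 1) / ((k : ℝ) + 1) ^ 2) := by
  have h0 : Summable (fun n : ℕ => 1 / (n : ℝ) ^ 2) :=
    Real.summable_one_div_nat_pow.mpr one_lt_two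
  have h1 : Summable (fun k : ℕ => 1 / ((k : ℝ) + 1) ^ 2) := by
    refine ((summable_nat_add_iff 1).mpr h0).congr fun k => ?_
    push_cast
    ring
  simpa [div_eq_mul_inv, one_div, mul_comm] using h1.mul_left (b + 1)


lemma exists_psi_rep {b : ℝ} (hb : 0 < b) :
    ∃ Ψ : ℝ → ℝ, ContinuousOn Ψ (Ioo 0 b) ∧ StrictConcaveOn ℝ (Ioo 0 b) Ψ ∧
      ∀ y ∈ Ioo 0 b, psi y = Ψ y := by
  have hu := summable_u b
  have hbound : ∀ k : ℕ, ∀ y ∈ Ioo 0 b, ‖aa k y‖ ≤ (b + 1) / ((k : ℝ) + 1) ^ 2 :=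
    fun k y hy => aa_bound hb k hy
  have hTU0 := tendstoUniformlyOn_tsum_nat hu hbound
  set Ψ : ℝ → ℝ := fun y => pn 1 y + ∑' k, aa k y with hΨ
  have hconst : TendstoUniformlyOn (fun (_ : ℕ) y => pn 1 y) (fun y => pn 1 y) atTop (Ioo 0 b) :=
    Metric.tendstoUniformlyOn_iff.mpr fun ε hε => Eventually.of_forall fun n y hy => by
      simpa using hε
  have hTU : TendstoUniformlyOn (fun n y => pn (n + 1) y) Ψ atTop (Ioo 0 b) := by
    have h := hconst.add hTU0
    have h2 : TendstoUniformlyOn (fun n y => pn 1 y + ∑ k ∈ Finset.range n, aa k y) Ψ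
        atTop (Ioo 0 b) := by
      simpa [hΨ, Pi.add_def] using h
    have h3 : (fun (n : ℕ) (y : ℝ) => pn 1 y + ∑ k ∈ Finset.range n, aa k y)
        = fun n y => pn (n + 1) y := by
      funext n y
      rw [← pn_succ]
    rwa [h3] at h2
  have hderiv : ∀ y ∈ Ioo 0 b, HasDerivAt (fun t => Real.log (Real.Gamma t)) (Ψ y) y := by
    intro y hy
    refine hasDerivAt_of_tendstoUniformlyOn isOpen_Ioo hTU
      (Eventually.of_forall fun n z hz => hasDerivAt_logGammaSeq (n + 1) hz.1) ?_ hy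
    intro z hz
    exact (Real.BohrMollerup.tendsto_log_gamma hz.1).comp (tendsto_add_atTop_nat 1)
  have hpsi : ∀ y ∈ Ioo 0 b, psi y = Ψ y := fun y hy => (hderiv y hy).deriv
  have hcont : ContinuousOn Ψ (Ioo 0 b) :=
    hTU.continuousOn (Frequently.of_forall fun n => pn_continuousOn (n + 1) b)
  set c : ℝ := 1 / b ^ 3 with hc
  have hpt : ∀ z ∈ Ioo 0 b, Tendsto (fun n => pn (n + 1) z) atTop (𝓝 (Ψ z)) :=
    fun z hz => hTU.tendsto_at hz
  have hcc : ConcaveOn ℝ (Ioo 0 b) (fun y => Ψ y + c * y ^ 2) := by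
    refine ⟨convex_Ioo 0 b, fun p hp q hq a a' ha ha' hab => ?_⟩
    have hmem : a • p + a' • q ∈ Ioo 0 b := (convex_Ioo 0 b) hp hq ha ha' hab
    have h1 : Tendsto (fun n => a • (pn (n + 1) p + c * p ^ 2) + a' • (pn (n + 1) q + c * q ^ 2))
        atTop (𝓝 (a • (Ψ p + c * p ^ 2) + a' • (Ψ q + c * q ^ 2))) := by
      simp only [smul_eq_mul]
      exact ((((hpt p hp).add tendsto_const_nhds).const_mul a).add
        (((hpt q hq).add tendsto_const_nhds).const_mul a'))
    have h2 : Tendsto (fun n => pn (n + 1) (a • p + a' • q) + c * (a • p + a' • q) ^ 2)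
        atTop (𝓝 (Ψ (a • p + a' • q) + c * (a • p + a' • q) ^ 2)) :=
      (hpt _ hmem).add tendsto_const_nhds
    exact le_of_tendsto_of_tendsto' h1 h2 fun n => (aux_concave hb n).2 hp hq ha ha' hab
  have hsq : StrictConcaveOn ℝ (Ioo 0 b) (fun y : ℝ => -(c * y ^ 2)) := by
    refine ⟨convex_Ioo 0 b, fun p hp q hq hpq a a' ha ha' hab => ?_⟩
    simp only [smul_eq_mul]
    have hc0 : 0 < c := by rw [hc]; positivity
    have hne : p - q ≠ 0 := sub_ne_zero.mpr hpq
    have ha2 : a' = 1 - a := by linarith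
    subst ha2
    nlinarith [mul_pos (mul_pos hc0 (mul_pos ha ha')) (pow_two_pos_of_ne_zero hne)]
  have hstrict : StrictConcaveOn ℝ (Ioo 0 b) Ψ := by
    have h := hcc.add_strictConcaveOn hsq
    have heqq : ((fun y => Ψ y + c * y ^ 2) + fun y : ℝ => -(c * y ^ 2)) = Ψ := by
      funext z
      simp only [Pi.add_apply]
      ring
    rwa [heqq] at h
  exact ⟨Ψ, hcont, hstrict, hpsi⟩

lemma key {a₁ a₂ : ℝ} (h1 : 0 < a₁) (h12 : a₁ < a₂) :
    ∫ u in a₁..a₂, psi u < (a₂ - a₁) * psi ((a₁ + a₂) / 2) := by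
  obtain ⟨Ψ, hcont, hconc, heq⟩ := exists_psi_rep (b := a₂ + 1) (by linarith)
  set m : ℝ := (a₁ + a₂) / 2 with hm
  set h : ℝ := (a₂ - a₁) / 2 with hh
  have hh0 : 0 < h := by rw [hh]; linarith
  have hsub : Icc a₁ a₂ ⊆ Ioo 0 (a₂ + 1) := fun z hz =>
    ⟨lt_of_lt_of_le h1 hz.1, lt_of_le_of_lt hz.2 (by linarith)⟩
  have hψcont : ContinuousOn psi (Icc a₁ a₂) :=
    ((hcont.mono hsub).congr fun z hz => heq z (hsub hz))
  have hm1 : a₁ ≤ m := by rw [hm]; linarith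
  have hm2 : m ≤ a₂ := by rw [hm]; linarith
  have hmaps1 : ∀ v ∈ Icc (0:ℝ) h, m - v ∈ Icc a₁ a₂ := by
    intro v hv
    obtain ⟨hv0, hvh⟩ := hv
    rw [hm, hh] at *
    constructor <;> [linarith; linarith]
  have hmaps2 : ∀ v ∈ Icc (0:ℝ) h, m + v ∈ Icc a₁ a₂ := by
    intro v hv
    obtain ⟨hv0, hvh⟩ := hv
    rw [hm, hh] at *
    constructor <;> [linarith; linarith]
  have hcomp1 : ContinuousOn (fun v => psi (m - v)) (Icc 0 h) :=
    hψcont.comp (by fun_prop) hmaps1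
  have hcomp2 : ContinuousOn (fun v => psi (m + v)) (Icc 0 h) :=
    hψcont.comp (by fun_prop) hmaps2
  have hint1 : IntervalIntegrable (fun v => psi (m - v)) volume 0 h := by
    apply ContinuousOn.intervalIntegrable
    rwa [uIcc_of_le hh0.le]
  have hint2 : IntervalIntegrable (fun v => psi (m + v)) volume 0 h := by
    apply ContinuousOn.intervalIntegrable
    rwa [uIcc_of_le hh0.le]
  -- rewrite the integral
  have e1 : ∫ v in (0:ℝ)..h, psi (m - v) = ∫ u in a₁..m, psi u := by
    have hmh : m - h = a₁ := by rw [hm, hh]; ring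
    rw [intervalIntegral.integral_comp_sub_left psi m, hmh, sub_zero]
  have e2 : ∫ v in (0:ℝ)..h, psi (m + v) = ∫ u in m..a₂, psi u := by
    have hmh : m + h = a₂ := by rw [hm, hh]; ring
    rw [intervalIntegral.integral_comp_add_left psi m, hmh, add_zero]
  have hintA : IntervalIntegrable psi volume a₁ m := by
    apply ContinuousOn.intervalIntegrable
    rw [uIcc_of_le hm1]
    exact hψcont.mono (Icc_subset_Icc le_rfl hm2)
  have hintB : IntervalIntegrable psi volume m a₂ := by
    apply ContinuousOn.intervalIntegrable
    rw [uIcc_of_le hm2]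
    exact hψcont.mono (Icc_subset_Icc hm1 le_rfl)
  have esplit : (∫ u in a₁..m, psi u) + ∫ u in m..a₂, psi u = ∫ u in a₁..a₂, psi u :=
    integral_add_adjacent_intervals hintA hintB
  -- the positive gap integral
  have hgap : 0 < ∫ v in (0:ℝ)..h, (2 * psi m - (psi (m - v) + psi (m + v))) := by
    refine intervalIntegral.intervalIntegral_pos_of_pos_on ?_ ?_ hh0
    · apply ContinuousOn.intervalIntegrable
      rw [uIcc_of_le hh0.le]
      exact (continuousOn_const.sub (hcomp1.add hcomp2))
    · intro v hv
      obtain ⟨hv0, hvh⟩ := hv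
      have hvIcc : v ∈ Icc (0:ℝ) h := ⟨hv0.le, hvh.le⟩
      have hp1 : m - v ∈ Ioo 0 (a₂ + 1) := hsub (hmaps1 v hvIcc)
      have hp2 : m + v ∈ Ioo 0 (a₂ + 1) := hsub (hmaps2 v hvIcc)
      have hm0 : m ∈ Ioo 0 (a₂ + 1) := hsub ⟨hm1, hm2⟩
      have hne : m - v ≠ m + v := by intro hcontra; nlinarith [hcontra]
      have hhalf : (0:ℝ) < 1/2 := by norm_num
      have hcs := hconc.2 hp1 hp2 hne hhalf hhalf (by norm_num)
      have hmid : (1/2 : ℝ) • (m - v) + (1/2 : ℝ) • (m + v) = m := by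
        simp only [smul_eq_mul]; ring
      rw [hmid] at hcs
      simp only [smul_eq_mul] at hcs
      rw [heq _ hp1, heq _ hp2, heq _ hm0]
      linarith
  have econst : ∫ v in (0:ℝ)..h, (2 * psi m) = 2 * psi m * h := by
    simp [smul_eq_mul]
    try ring
  have esub : ∫ v in (0:ℝ)..h, (2 * psi m - (psi (m - v) + psi (m + v)))
      = 2 * psi m * h - ((∫ v in (0:ℝ)..h, psi (m - v)) + ∫ v in (0:ℝ)..h, psi (m + v)) := by
    rw [intervalIntegral.integral_sub intervalIntegrable_const (hint1.add hint2),
      intervalIntegral.integral_add hint1 hint2]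
    simp [smul_eq_mul]
    try ring
  have hfinal : (∫ u in a₁..a₂, psi u) < 2 * psi m * h := by
    rw [← esplit, ← e1, ← e2]
    nlinarith [hgap, esub]
  have : 2 * psi m * h = (a₂ - a₁) * psi m := by rw [hh]; ring
  rw [this] at hfinal
  exact hfinal

end PsiAux

theorem stmt_10 (x s t : ℝ) (hx : 0 ≤ x) (hs : 0 < s) (ht : 0 < t) (hst : s ≠ t) :
    (1 / (t - s)) * ∫ u in s..t, psi (x + u) < psi (x + (s + t) / 2) := by
  have comp : ∀ a b : ℝ, ∫ u in a..b, psi (x + u) = ∫ u in (x + a)..(x + b), psi u :=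
    fun a b => intervalIntegral.integral_comp_add_left psi x
  have main : ∀ a b : ℝ, 0 < a → a < b →
      (1 / (b - a)) * ∫ u in (x + a)..(x + b), psi u < psi (x + (a + b) / 2) := by
    intro a b ha hab
    have h1 : 0 < x + a := by linarith
    have h2 : x + a < x + b := by linarith
    have hk := PsiAux.key h1 h2
    have hmid : (x + a + (x + b)) / 2 = x + (a + b) / 2 := by ring
    rw [hmid] at hk
    have hd : (0:ℝ) < b - a := by linarith
    have hd' : x + b - (x + a) = b - a := by ring
    rw [hd'] at hk
    calc (1 / (b - a)) * ∫ u in (x + a)..(x + b), psi u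
        < (1 / (b - a)) * ((b - a) * psi (x + (a + b) / 2)) := by
          apply mul_lt_mul_of_pos_left hk
          positivity
      _ = psi (x + (a + b) / 2) := by field_simp
  rcases lt_or_gt_of_ne hst with hlt | hgt
  · rw [comp s t]
    exact main s t hs hlt
  · have hsym : ∫ u in s..t, psi (x + u) = -∫ u in t..s, psi (x + u) := by
      rw [intervalIntegral.integral_symm]
    rw [hsym, comp t s]
    have hts : (1 / (t - s)) * -(∫ u in (x + t)..(x + s), psi u)
        = (1 / (s - t)) * ∫ u in (x + t)..(x + s), psi u := by
      rw [show t - s = -(s - t) by ring, div_neg]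
      ring
    rw [hts]
    have := main t s ht hgt
    rwa [show (t + s) / 2 = (s + t) / 2 by ring] at this
end

section
/- For real numbers s ≠ t and x > -min{s,t}, the function x ↦ ψ(x + (s+t)/2) - (ln Γ(x+t) - ln Γ(x+s))/(t-s) is completely monotonic on (-min{s,t}, ∞). -/
open Real Filter Finset intervalIntegral

noncomputable def Rf : ℕ → ℝ → ℝ
  | 0 => Real.log
  | (n+1) => fun y => (-1:ℝ)^n * (n.factorial : ℝ) * (y^(n+1))⁻¹

lemma Rf_succ (n : ℕ) (y : ℝ) : Rf (n+1) y = (-1:ℝ)^n * (n.factorial : ℝ) * (y^(n+1))⁻¹ := rfl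

lemma hasDerivAt_Rf (n : ℕ) {y : ℝ} (hy : 0 < y) : HasDerivAt (Rf n) (Rf (n+1) y) y := by
  induction n with
  | zero =>
    simpa [Rf] using Real.hasDerivAt_log hy.ne'
  | succ n _ =>
    have hyne : y ^ (n+1) ≠ 0 := pow_ne_zero _ hy.ne'
    have h1 : HasDerivAt (fun y : ℝ => (y^(n+1))⁻¹)
        (-(((n:ℝ)+1) * y ^ n) / (y^(n+1))^2) y := by
      simpa using (hasDerivAt_pow (n+1) y).fun_inv hyne
    have h2 := h1.const_mul ((-1:ℝ)^n * (n.factorial:ℝ))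
    have : HasDerivAt (Rf (n+1)) ((-1:ℝ)^n * (n.factorial:ℝ) * (-(((n:ℝ)+1) * y ^ n) / (y^(n+1))^2)) y := h2
    convert this using 1
    rw [Rf_succ]
    have hyn : y ≠ 0 := hy.ne'
    field_simp
    rw [pow_succ _ (n+1), pow_succ]
    push_cast [Nat.factorial_succ]
    ring



lemma key_amgm (p : ℕ) {c y : ℝ} (hc : 0 ≤ c) (hy : 0 ≤ y) :
    ((p:ℝ)+1) * (c * y^p) ≤ c^(p+1) + p * y^(p+1) := by
  induction p with
  | zero => simp
  | succ p ih =>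
    have h1 : 0 ≤ (c - y) * (c^(p+1) - y^(p+1)) := by
      rcases le_total y c with h | h
      · have := pow_le_pow_left₀ hy h (p+1)
        nlinarith
      · have := pow_le_pow_left₀ hc h (p+1)
        nlinarith
    have h2 := mul_le_mul_of_nonneg_right ih hy
    push_cast
    rw [pow_succ c (p+1), pow_succ y (p+1), pow_succ y p] at *
    nlinarith

lemma tangent (p : ℕ) {c y : ℝ} (hc : 0 < c) (hy : 0 < y) :
    (c^p)⁻¹ - p * (c^(p+1))⁻¹ * (y - c) ≤ (y^p)⁻¹ := by
  rw [← sub_nonneg]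
  have key := key_amgm p hc.le hy.le
  have h1 : (y^p)⁻¹ - ((c^p)⁻¹ - p * (c^(p+1))⁻¹ * (y - c))
      = (c^(p+1) + p*y^(p+1) - (((p:ℝ)+1) * (c * y^p))) / (y^p * c^(p+1)) := by
    field_simp
    ring
  rw [h1]
  exact div_nonneg (by linarith) (by positivity)

lemma integral_phi_ge {A B : ℝ} (hA : 0 < A) (hAB : A ≤ B) (p : ℕ) :
    (B - A) * ((((A+B)/2)^p)⁻¹) ≤ ∫ y in A..B, (y^p)⁻¹ := by
  set c : ℝ := (A+B)/2 with hcdef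
  have hc : 0 < c := by rw [hcdef]; linarith
  have hIcc : Set.uIcc A B = Set.Icc A B := Set.uIcc_of_le hAB
  have hcont : ContinuousOn (fun y : ℝ => (y^p)⁻¹) (Set.uIcc A B) := by
    apply ContinuousOn.inv₀ (by fun_prop)
    intro y hy
    rw [hIcc] at hy
    exact pow_ne_zero _ (lt_of_lt_of_le hA hy.1).ne'
  have hint : IntervalIntegrable (fun y : ℝ => (y^p)⁻¹) MeasureTheory.volume A B :=
    hcont.intervalIntegrable
  have hint2 : IntervalIntegrable (fun y : ℝ => (c^p)⁻¹ - p * (c^(p+1))⁻¹ * (y - c))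
      MeasureTheory.volume A B := by
    apply ContinuousOn.intervalIntegrable; fun_prop
  have hmono := intervalIntegral.integral_mono_on hAB hint2 hint (fun y hy => by
    exact tangent p hc (lt_of_lt_of_le hA hy.1))
  refine le_trans (le_of_eq ?_) hmono
  rw [intervalIntegral.integral_sub (by apply ContinuousOn.intervalIntegrable; fun_prop)
      (by apply ContinuousOn.intervalIntegrable; fun_prop)]
  have h1 : ∫ _ in A..B, (c^p)⁻¹ = (B - A) * (c^p)⁻¹ := by
    simp [intervalIntegral.integral_const, smul_eq_mul, mul_comm]
  have h2 : ∫ y in A..B, (p : ℝ) * (c^(p+1))⁻¹ * (y - c) = 0 := by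
    rw [intervalIntegral.integral_const_mul]
    rw [intervalIntegral.integral_sub intervalIntegrable_id (intervalIntegrable_const)]
    rw [integral_id, intervalIntegral.integral_const]
    have : (B^2 - A^2)/2 - (B - A) • c = 0 := by
      rw [smul_eq_mul, hcdef]; ring
    rw [this, mul_zero]
  rw [h1, h2, sub_zero]

lemma neg_pow_Rf_succ (n : ℕ) (y : ℝ) :
    (-1:ℝ)^n * Rf (n+1) y = (n.factorial : ℝ) * (y^(n+1))⁻¹ := by
  rw [Rf_succ, ← mul_assoc, ← mul_assoc, ← mul_pow]
  norm_num

lemma Rf_cont (n : ℕ) {A B : ℝ} (hA : 0 < A) (hAB : A ≤ B) :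
    ContinuousOn (Rf (n+1)) (Set.uIcc A B) := by
  rw [Set.uIcc_of_le hAB]
  intro y hy
  apply ContinuousWithinAt.congr (f := fun y : ℝ => (-1:ℝ)^n * (n.factorial : ℝ) * (y^(n+1))⁻¹)
  · apply ContinuousWithinAt.mul continuousWithinAt_const
    apply ContinuousWithinAt.inv₀ ((continuous_pow (n+1)).continuousWithinAt)
    exact pow_ne_zero _ (lt_of_lt_of_le hA hy.1).ne'
  · intro z _; rw [Rf_succ]
  · rw [Rf_succ]

lemma Rf_sub_eq_integral (n : ℕ) {A B : ℝ} (hA : 0 < A) (hAB : A ≤ B) :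
    Rf n B - Rf n A = ∫ y in A..B, Rf (n+1) y := by
  refine (intervalIntegral.integral_eq_sub_of_hasDerivAt (fun y hy => ?_) ?_).symm
  · rw [Set.uIcc_of_le hAB] at hy
    exact hasDerivAt_Rf n (lt_of_lt_of_le hA hy.1)
  · exact (Rf_cont n hA hAB).intervalIntegrable

lemma core (n : ℕ) {A B : ℝ} (hA : 0 < A) (hAB : A < B) :
    0 ≤ (-1:ℝ)^n * ((Rf n B - Rf n A)/(B-A) - Rf (n+1) ((A+B)/2)) := by
  have hBA : (0:ℝ) < B - A := by linarith
  have key : (B - A) * ((((A+B)/2)^(n+1))⁻¹) ≤ ∫ y in A..B, (y^(n+1))⁻¹ :=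
    integral_phi_ge hA hAB.le (n+1)
  have hFTC := Rf_sub_eq_integral n hA hAB.le
  have hint : (-1:ℝ)^n * (Rf n B - Rf n A) = (n.factorial : ℝ) * ∫ y in A..B, (y^(n+1))⁻¹ := by
    rw [hFTC, ← intervalIntegral.integral_const_mul]
    rw [← intervalIntegral.integral_const_mul]
    apply intervalIntegral.integral_congr
    intro y _
    show (-1:ℝ)^n * Rf (n+1) y = (n.factorial : ℝ) * (y^(n+1))⁻¹
    exact neg_pow_Rf_succ n y
  have hfac : (0:ℝ) < n.factorial := by positivity
  rw [mul_sub, mul_div_assoc']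
  rw [hint, neg_pow_Rf_succ]
  rw [sub_nonneg, le_div_iff₀ hBA]
  calc (n.factorial : ℝ) * ((((A+B)/2)^(n+1))⁻¹) * (B - A)
      = (n.factorial : ℝ) * ((B - A) * ((((A+B)/2)^(n+1))⁻¹)) := by ring
    _ ≤ (n.factorial : ℝ) * ∫ y in A..B, (y^(n+1))⁻¹ :=
        mul_le_mul_of_nonneg_left key hfac.le



lemma master {c : ℝ} {u : ℕ → ℕ → ℝ → ℝ} {f : ℝ → ℝ}
    (hderiv : ∀ n m x, c < x → HasDerivAt (u n m) (u (n+1) m x) x)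
    (hbound : ∀ n a, c < a → ∃ B : ℕ → ℝ, Summable B ∧ ∀ m x, a ≤ x → |u n m x| ≤ B m)
    (hf : ∀ x, c < x → f x = ∑' m, u 0 m x) :
    ∀ n x, c < x → iteratedDeriv n f x = ∑' m, u n m x := by
  intro n
  induction n with
  | zero => simpa [iteratedDeriv_zero] using hf
  | succ n ih =>
    intro x hx
    rw [iteratedDeriv_succ]
    set a : ℝ := (c + x) / 2 with ha
    have hca : c < a := by rw [ha]; linarith
    have hax : a < x := by rw [ha]; linarith
    obtain ⟨B, hBsum, hB⟩ := hbound n a hca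
    obtain ⟨B', hB'sum, hB'⟩ := hbound (n+1) a hca
    have hopen : IsOpen (Set.Ioi a) := isOpen_Ioi
    -- uniform convergence of derivative partial sums on Ioi a
    have hTU : TendstoUniformlyOn (fun N x => ∑ m ∈ Finset.range N, u (n+1) m x)
        (fun x => ∑' m, u (n+1) m x) atTop (Set.Ioi a) := by
      apply tendstoUniformlyOn_tsum_nat hB'sum
      intro m y hy
      exact (Real.norm_eq_abs _ ▸ hB' m y (le_of_lt hy))
    have hD : HasDerivAt (fun y => ∑' m, u n m y) (∑' m, u (n+1) m x) x := by
      apply hasDerivAt_of_tendstoUniformlyOn hopen hTU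
      · filter_upwards with N y hy
        exact HasDerivAt.fun_sum (fun m _ => hderiv n m y (lt_trans hca hy))
      · intro y hy
        have hsum : Summable (fun m => u n m y) := by
          apply Summable.of_norm_bounded hBsum
          intro m
          exact (Real.norm_eq_abs _ ▸ hB m y (le_of_lt hy))
        exact hsum.hasSum.tendsto_sum_nat
      · exact hax
    have heq : (iteratedDeriv n f) =ᶠ[nhds x] (fun y => ∑' m, u n m y) := by
      filter_upwards [isOpen_Ioi.mem_nhds (show c < x from hx)] with y hy
      exact ih y hy
    rw [heq.deriv_eq]
    exact hD.deriv



noncomputable def pterm (m : ℕ) (z : ℝ) : ℝ :=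
  (Real.log (m+2) - Real.log (m+1)) - (z + (m+1))⁻¹

noncomputable def gfun (z : ℝ) : ℝ := -z⁻¹ + ∑' m, pterm m z

noncomputable def Vfun (N : ℕ) (z : ℝ) : ℝ :=
  z * Real.log N + Real.log (N.factorial) - ∑ j ∈ Finset.range (N+1), Real.log (z + j)

noncomputable def Hfun (N : ℕ) (z : ℝ) : ℝ :=
  Real.log N - ∑ j ∈ Finset.range (N+1), (z + j)⁻¹

lemma log_sub_le {x y : ℝ} (hx : 0 < x) (hxy : x ≤ y) :
    Real.log y - Real.log x ≤ (y - x) / x := by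
  have hy : 0 < y := lt_of_lt_of_le hx hxy
  have h := Real.log_le_sub_one_of_pos (show (0:ℝ) < y/x by positivity)
  rw [Real.log_div (by positivity) hx.ne'] at h
  have : y / x - 1 = (y - x)/x := by field_simp
  linarith [this ▸ h]

lemma le_log_sub {x y : ℝ} (hx : 0 < x) (hxy : x ≤ y) :
    (y - x) / y ≤ Real.log y - Real.log x := by
  have hy : 0 < y := lt_of_lt_of_le hx hxy
  have h := Real.log_le_sub_one_of_pos (show (0:ℝ) < x/y by positivity)
  rw [Real.log_div hx.ne' hy.ne'] at h
  have : x / y - 1 = -((y - x)/y) := by field_simp; ring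
  linarith [this ▸ h]

lemma pterm_bound (m : ℕ) {z b : ℝ} (hz : 0 < z) (hzb : z ≤ b) :
    |pterm m z| ≤ (1 + b) / ((m:ℝ)+1)^2 := by
  have hm1 : (0:ℝ) < (m:ℝ)+1 := by positivity
  have hm2 : ((m:ℝ)+1) ≤ (m:ℝ)+2 := by linarith
  have hub : Real.log ((m:ℝ)+2) - Real.log ((m:ℝ)+1) ≤ ((m:ℝ)+1)⁻¹ := by
    have := log_sub_le hm1 hm2
    refine this.trans (le_of_eq ?_)
    field_simp
    norm_num
  have hlb : ((m:ℝ)+2)⁻¹ ≤ Real.log ((m:ℝ)+2) - Real.log ((m:ℝ)+1) := by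
    have := le_log_sub hm1 hm2
    refine le_trans (le_of_eq ?_) this
    norm_num
  have hz1 : (z + ((m:ℝ)+1))⁻¹ ≤ ((m:ℝ)+1)⁻¹ := by
    apply inv_anti₀ hm1; linarith
  have hz2 : ((m:ℝ)+1)⁻¹ - (z + ((m:ℝ)+1))⁻¹ ≤ b / ((m:ℝ)+1)^2 := by
    have h1 : ((m:ℝ)+1)⁻¹ - (z + ((m:ℝ)+1))⁻¹ = z / (((m:ℝ)+1) * (z + ((m:ℝ)+1))) := by
      field_simp; ring
    rw [h1]
    apply div_le_div₀ (by linarith) (by linarith) (by positivity)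
    rw [pow_two]
    apply mul_le_mul_of_nonneg_left (by linarith) hm1.le
  have hdiff : ((m:ℝ)+1)⁻¹ - ((m:ℝ)+2)⁻¹ ≤ 1 / ((m:ℝ)+1)^2 := by
    rw [div_eq_inv_mul, mul_one]
    have h1 : ((m:ℝ)+1)⁻¹ - ((m:ℝ)+2)⁻¹ = 1 / ((((m:ℝ))+1) * (((m:ℝ))+2)) := by field_simp; norm_num
    rw [h1, pow_two, one_div]
    apply inv_anti₀ (by positivity)
    apply mul_le_mul_of_nonneg_left hm2 hm1.le
  have hbnn : (0:ℝ) ≤ b / ((m:ℝ)+1)^2 := div_nonneg (by linarith) (by positivity)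
  have honn : (0:ℝ) ≤ 1 / ((m:ℝ)+1)^2 := by positivity
  have hsplit : (1+b)/(((m:ℝ)+1)^2) = 1/(((m:ℝ)+1)^2) + b/(((m:ℝ)+1)^2) := by ring
  rw [abs_le]
  unfold pterm
  push_cast
  constructor
  · linarith
  · linarith

lemma summable_base : Summable (fun m : ℕ => 1/((m:ℝ)+1)^2) := by
  have h := (summable_nat_add_iff (f := fun n : ℕ => 1/(n:ℝ)^2) 1).mpr
    (Real.summable_one_div_nat_pow.mpr one_lt_two)
  apply h.congr
  intro m
  push_cast
  ring

lemma summable_const_div (C : ℝ) : Summable (fun m : ℕ => C/((m:ℝ)+1)^2) := by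
  have := summable_base.mul_left C
  apply this.congr
  intro m
  field_simp

lemma summable_inv_sq_shift {δ : ℝ} (hδ : 0 < δ) :
    Summable (fun m : ℕ => ((δ + m)^2)⁻¹) := by
  have hc : 0 < min δ 1 := lt_min hδ one_pos
  have hle : ∀ m : ℕ, ((δ + (m:ℝ))^2)⁻¹ ≤ ((min δ 1)^2)⁻¹ * (1/((m:ℝ)+1)^2) := by
    intro m
    have hm : (0:ℝ) ≤ m := Nat.cast_nonneg m
    have key : min δ 1 * ((m:ℝ)+1) ≤ δ + m := by
      have h1 : min δ 1 ≤ δ := min_le_left _ _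
      have h2 : min δ 1 ≤ 1 := min_le_right _ _
      nlinarith
    have hpos : (0:ℝ) < min δ 1 * ((m:ℝ)+1) := by positivity
    have hsq : (min δ 1 * ((m:ℝ)+1))^2 ≤ (δ+m)^2 := by
      apply pow_le_pow_left₀ hpos.le key
    calc ((δ+(m:ℝ))^2)⁻¹ ≤ ((min δ 1 * ((m:ℝ)+1))^2)⁻¹ := by
          apply inv_anti₀ (by positivity) hsq
      _ = ((min δ 1)^2)⁻¹ * (1/((m:ℝ)+1)^2) := by
          rw [mul_pow]
          field_simp
  exact Summable.of_nonneg_of_le (fun m => by positivity) hle (summable_base.mul_left _)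

lemma telescope (K : ℕ) :
    ∑ m ∈ Finset.range K, (Real.log (m+2) - Real.log (m+1)) = Real.log (K+1) := by
  have h := Finset.sum_range_sub (f := fun m : ℕ => Real.log (m+1)) K
  simp only [Nat.cast_zero, zero_add, Real.log_one, sub_zero] at h
  rw [← h]
  apply Finset.sum_congr rfl
  intro m _
  congr 2
  push_cast
  ring

lemma Hfun_eq (K : ℕ) (z : ℝ) :
    Hfun (K+1) z = -z⁻¹ + (∑ m ∈ Finset.range K, pterm m z) - (z + (K+1))⁻¹ := by
  have h1 : ∑ m ∈ Finset.range K, pterm m z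
      = Real.log (K+1) - ∑ m ∈ Finset.range K, (z+((m:ℝ)+1))⁻¹ := by
    unfold pterm
    rw [Finset.sum_sub_distrib, telescope]
  have h2 : ∑ j ∈ Finset.range (K+2), (z + (j:ℝ))⁻¹
      = z⁻¹ + (∑ m ∈ Finset.range K, (z+((m:ℝ)+1))⁻¹) + (z + ((K:ℝ)+1))⁻¹ := by
    rw [Finset.sum_range_succ' (fun j : ℕ => (z + (j:ℝ))⁻¹) (K+1), Finset.sum_range_succ]
    push_cast
    ring
  unfold Hfun
  rw [show K+1+1 = K+2 from rfl, h2, h1]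
  push_cast
  ring

lemma tuo_pterm {b : ℝ} :
    TendstoUniformlyOn (fun K z => ∑ m ∈ Finset.range K, pterm m z)
      (fun z => ∑' m, pterm m z) atTop (Set.Ioo 0 b) := by
  apply tendstoUniformlyOn_tsum_nat (summable_const_div (1 + b))
  intro m z hz
  rw [Real.norm_eq_abs]
  have h := pterm_bound m hz.1 hz.2.le
  simpa [div_eq_mul_inv] using h

lemma summable_pterm {z : ℝ} (hz : 0 < z) : Summable (fun m => pterm m z) := by
  apply Summable.of_norm_bounded (summable_const_div (1 + (z+1)))
  intro m
  rw [Real.norm_eq_abs]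
  exact pterm_bound m hz (by linarith)

lemma tuo_H {b : ℝ} (hb : 0 < b) :
    TendstoUniformlyOn Hfun gfun atTop (Set.Ioo 0 b) := by
  rw [Metric.tendstoUniformlyOn_iff]
  intro ε hε
  have h1 := Metric.tendstoUniformlyOn_iff.mp (tuo_pterm (b := b)) (ε/2) (by linarith)
  rw [eventually_atTop] at h1
  obtain ⟨K₀, hK₀⟩ := h1
  obtain ⟨M, hM⟩ := exists_nat_gt (2/ε)
  rw [eventually_atTop]
  refine ⟨max (K₀+1) (M+1), fun N hN z hz => ?_⟩
  obtain ⟨K, rfl⟩ : ∃ K, N = K + 1 :=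
    ⟨N - 1, by omega⟩
  have hK : K₀ ≤ K := by
    have := le_trans (le_max_left (K₀+1) (M+1)) hN; omega
  have hMN : (M:ℝ) ≤ (K:ℝ)+1 := by
    have : M + 1 ≤ K + 1 := le_trans (le_max_right (K₀+1) (M+1)) hN
    exact_mod_cast by omega
  have hd := hK₀ K hK z hz
  rw [Real.dist_eq] at hd ⊢
  rw [Hfun_eq K z, gfun]
  have hzK : (0:ℝ) < z + ((K:ℝ)+1) := by
    have := hz.1; positivity
  have hinv : (z + ((K:ℝ)+1))⁻¹ < ε/2 := by
    have hM0 : (0:ℝ) < M := lt_trans (by positivity) hM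
    have h2 : (z + ((K:ℝ)+1))⁻¹ ≤ (M:ℝ)⁻¹ := by
      apply inv_anti₀ hM0
      linarith [hz.1]
    have h3 : (M:ℝ)⁻¹ < ε/2 := by
      have h4 : 2 < ε * M := by
        rw [div_lt_iff₀ hε] at hM; linarith
      rw [inv_lt_iff_one_lt_mul₀ hM0]
      nlinarith
    linarith
  have habs : |(z + ((K:ℝ)+1))⁻¹| = (z + ((K:ℝ)+1))⁻¹ := abs_of_pos (by positivity)
  calc |(-z⁻¹ + ∑' m, pterm m z) - (-z⁻¹ + (∑ m ∈ Finset.range K, pterm m z) - (z + (↑K+1))⁻¹)|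
      = |((∑' m, pterm m z) - ∑ m ∈ Finset.range K, pterm m z) + (z + (↑K+1))⁻¹| := by
        congr 1; push_cast; ring
    _ ≤ |(∑' m, pterm m z) - ∑ m ∈ Finset.range K, pterm m z| + |(z + (↑K+1))⁻¹| := abs_add_le _ _
    _ < ε/2 + ε/2 := by
        push_cast at hd ⊢
        rw [habs]
        exact add_lt_add hd hinv
    _ = ε := by ring

lemma hasDerivAt_Vfun (N : ℕ) {z : ℝ} (hz : 0 < z) :
    HasDerivAt (Vfun N) (Hfun N z) z := by
  have h1 : HasDerivAt (fun z : ℝ => z * Real.log N + Real.log (N.factorial))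
      (Real.log N) z := by
    simpa using ((hasDerivAt_id z).mul_const (Real.log N)).add_const (Real.log N.factorial)
  have h2 : HasDerivAt (fun z : ℝ => ∑ j ∈ Finset.range (N+1), Real.log (z + j))
      (∑ j ∈ Finset.range (N+1), (z + (j:ℝ))⁻¹) z := by
    apply HasDerivAt.fun_sum
    intro j _
    have hzj : z + (j:ℝ) ≠ 0 := by positivity
    simpa [Function.comp_def] using (Real.hasDerivAt_log hzj).comp z ((hasDerivAt_id z).add_const (j:ℝ))
  exact h1.sub h2

lemma Vfun_tendsto {z : ℝ} (hz : 0 < z) :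
    Filter.Tendsto (fun N => Vfun N z) atTop (nhds (Real.log (Real.Gamma z))) := by
  have hΓ : Real.Gamma z ≠ 0 := (Real.Gamma_pos_of_pos hz).ne'
  have hlog := (Real.GammaSeq_tendsto_Gamma z).log hΓ
  apply Filter.Tendsto.congr' _ hlog
  filter_upwards [eventually_ge_atTop 1] with N hN
  have hN0 : (0:ℝ) < N := by exact_mod_cast hN
  have hprod : ∀ j ∈ Finset.range (N+1), z + (j:ℝ) ≠ 0 := by
    intro j _; positivity
  have hprodpos : (0:ℝ) < ∏ j ∈ Finset.range (N+1), (z + (j:ℝ)) := by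
    apply Finset.prod_pos; intro j _; positivity
  unfold Real.GammaSeq
  rw [Real.log_div (by positivity) hprodpos.ne', Real.log_mul (by positivity) (by positivity),
    Real.log_rpow hN0, Real.log_prod hprod]
  rfl

lemma H_tendsto {z : ℝ} (hz : 0 < z) :
    Filter.Tendsto (fun N => Hfun N z) atTop (nhds (gfun z)) :=
  (tuo_H (b := z+1) (by linarith)).tendsto_at ⟨hz, by linarith⟩

lemma psi_eq_gfun {z : ℝ} (hz : 0 < z) : psi z = gfun z := by
  have hD : HasDerivAt (fun y => Real.log (Real.Gamma y)) (gfun z) z := by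
    apply hasDerivAt_of_tendstoUniformlyOn isOpen_Ioo (tuo_H (b := z+1) (by linarith))
    · filter_upwards with N y hy
      exact hasDerivAt_Vfun N hy.1
    · intro y hy
      exact Vfun_tendsto hy.1
    · exact ⟨hz, by linarith⟩
  exact hD.deriv

noncomputable def uu (s t : ℝ) (n m : ℕ) (x : ℝ) : ℝ :=
  (Rf n (x+t+m) - Rf n (x+s+m))/(t-s) - Rf (n+1) (x+(s+t)/2+m)

lemma Rf_shift_hasDeriv (n : ℕ) (d : ℝ) {x : ℝ} (h : 0 < x + d) :
    HasDerivAt (fun x => Rf n (x + d)) (Rf (n+1) (x + d)) x := by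
  simpa [Function.comp_def] using (hasDerivAt_Rf n h).comp x ((hasDerivAt_id x).add_const d)

lemma uu_hasDeriv {s t : ℝ} (hst : s < t) (n m : ℕ) {x : ℝ} (hx : -s < x) :
    HasDerivAt (uu s t n m) (uu s t (n+1) m x) x := by
  have hA : 0 < x + (s + (m:ℝ)) := by linarith [Nat.cast_nonneg (α := ℝ) m]
  have hB : 0 < x + (t + (m:ℝ)) := by linarith
  have hM : 0 < x + ((s+t)/2 + (m:ℝ)) := by linarith
  have h1 := Rf_shift_hasDeriv n (t + (m:ℝ)) hB
  have h2 := Rf_shift_hasDeriv n (s + (m:ℝ)) hA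
  have h3 := Rf_shift_hasDeriv (n+1) ((s+t)/2 + (m:ℝ)) hM
  have h4 := ((h1.sub h2).div_const (t-s)).sub h3
  rw [show uu s t n m = fun x => uu s t n m x from rfl]
  simpa [uu, ← add_assoc, Pi.sub_def] using h4

lemma uu_nonneg {s t : ℝ} (hst : s < t) (n m : ℕ) {x : ℝ} (hx : -s < x) :
    0 ≤ (-1:ℝ)^n * uu s t n m x := by
  have hA : 0 < x + s + (m:ℝ) := by linarith [Nat.cast_nonneg (α := ℝ) m]
  have hAB : x + s + (m:ℝ) < x + t + (m:ℝ) := by linarith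
  have h := core n hA hAB
  have e1 : x + t + (m:ℝ) - (x + s + (m:ℝ)) = t - s := by ring
  have e2 : (x + s + (m:ℝ) + (x + t + (m:ℝ)))/2 = x + (s+t)/2 + (m:ℝ) := by ring
  rw [e1, e2] at h
  exact h

lemma uu_bound {s t : ℝ} (hst : s < t) (n : ℕ) {a : ℝ} (ha : -s < a) :
    ∃ B : ℕ → ℝ, Summable B ∧ ∀ m : ℕ, ∀ x : ℝ, a ≤ x → |uu s t n m x| ≤ B m := by
  have hδ : 0 < a + s := by linarith
  have hts : (0:ℝ) < t - s := by linarith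
  match n with
  | 0 =>
    refine ⟨fun m => (t-s) * (((a+s)+(m:ℝ))^2)⁻¹, (summable_inv_sq_shift hδ).mul_left _, ?_⟩
    intro m x hx
    have hm : (0:ℝ) ≤ m := Nat.cast_nonneg m
    have hA : 0 < x + s + (m:ℝ) := by linarith
    have hAB : x + s + (m:ℝ) ≤ x + t + (m:ℝ) := by linarith
    have hB : 0 < x + t + (m:ℝ) := lt_of_lt_of_le hA hAB
    have hAM : x + s + (m:ℝ) ≤ x + (s+t)/2 + (m:ℝ) := by linarith
    have hMB : x + (s+t)/2 + (m:ℝ) ≤ x + t + (m:ℝ) := by linarith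
    have hM : 0 < x + (s+t)/2 + (m:ℝ) := lt_of_lt_of_le hA hAM
    have huu : uu s t 0 m x = (Real.log (x+t+(m:ℝ)) - Real.log (x+s+(m:ℝ)))/(t-s)
        - (x + (s+t)/2 + (m:ℝ))⁻¹ := by
      unfold uu
      rw [Rf_succ]
      norm_num
      rfl
    have hub := log_sub_le hA hAB
    have hlb := le_log_sub hA hAB
    have hBA : x + t + (m:ℝ) - (x + s + (m:ℝ)) = t - s := by ring
    rw [hBA] at hub hlb
    have hup : (Real.log (x+t+(m:ℝ)) - Real.log (x+s+(m:ℝ)))/(t-s) ≤ (x+s+(m:ℝ))⁻¹ := by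
      rw [div_le_iff₀ hts]
      rw [div_eq_mul_inv] at hub
      calc Real.log (x+t+(m:ℝ)) - Real.log (x+s+(m:ℝ)) ≤ (t-s) * (x+s+(m:ℝ))⁻¹ := hub
        _ = (x+s+(m:ℝ))⁻¹ * (t-s) := by ring
    have hlo : (x+t+(m:ℝ))⁻¹ ≤ (Real.log (x+t+(m:ℝ)) - Real.log (x+s+(m:ℝ)))/(t-s) := by
      rw [le_div_iff₀ hts]
      rw [div_eq_mul_inv] at hlb
      calc (x+t+(m:ℝ))⁻¹ * (t - s) = (t-s) * (x+t+(m:ℝ))⁻¹ := by ring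
        _ ≤ Real.log (x+t+(m:ℝ)) - Real.log (x+s+(m:ℝ)) := hlb
    have hi1 : (x + (s+t)/2 + (m:ℝ))⁻¹ ≤ (x+s+(m:ℝ))⁻¹ := inv_anti₀ hA hAM
    have hi2 : (x+t+(m:ℝ))⁻¹ ≤ (x + (s+t)/2 + (m:ℝ))⁻¹ := inv_anti₀ hM hMB
    have key : (x+s+(m:ℝ))⁻¹ - (x+t+(m:ℝ))⁻¹ ≤ (t-s) * (((a+s)+(m:ℝ))^2)⁻¹ := by
      have h1 : (x+s+(m:ℝ))⁻¹ - (x+t+(m:ℝ))⁻¹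
          = (t-s)/((x+s+(m:ℝ)) * (x+t+(m:ℝ))) := by
        field_simp; ring
      have h2 : ((a+s)+(m:ℝ))^2 ≤ (x+s+(m:ℝ)) * (x+t+(m:ℝ)) := by nlinarith
      rw [h1, ← div_eq_mul_inv ..]
      exact div_le_div_of_nonneg_left hts.le (by positivity) h2
    rw [huu, abs_le]
    constructor <;> linarith
  | (n+1) =>
    refine ⟨fun m => (2*((n+1).factorial:ℝ)*((a+s)^n)⁻¹) * (((a+s)+(m:ℝ))^2)⁻¹,
      (summable_inv_sq_shift hδ).mul_left _, ?_⟩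
    intro m x hx
    have hm : (0:ℝ) ≤ m := Nat.cast_nonneg m
    have hA : 0 < x + s + (m:ℝ) := by linarith
    have hAB : x + s + (m:ℝ) ≤ x + t + (m:ℝ) := by linarith
    have hB : 0 < x + t + (m:ℝ) := lt_of_lt_of_le hA hAB
    have hAM : x + s + (m:ℝ) ≤ x + (s+t)/2 + (m:ℝ) := by linarith
    have hM : 0 < x + (s+t)/2 + (m:ℝ) := lt_of_lt_of_le hA hAM
    have hδm : 0 < (a+s) + (m:ℝ) := by linarith
    have hδA : (a+s) + (m:ℝ) ≤ x + s + (m:ℝ) := by linarith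
    set A := x + s + (m:ℝ)
    set B := x + t + (m:ℝ)
    set M := x + (s+t)/2 + (m:ℝ)
    have hpowinv : (B^(n+1))⁻¹ ≤ (A^(n+1))⁻¹ :=
      inv_anti₀ (by positivity) (pow_le_pow_left₀ hA.le hAB (n+1))
    have htan := tangent (n+1) hA hB
    have h1 : |Rf (n+1) B - Rf (n+1) A|
        ≤ ((n+1).factorial:ℝ) * (t-s) * (A^(n+2))⁻¹ := by
      rw [Rf_succ, Rf_succ]
      have e1 : (-1:ℝ)^n * (n.factorial:ℝ) * (B^(n+1))⁻¹ - (-1:ℝ)^n * (n.factorial:ℝ) * (A^(n+1))⁻¹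
          = (-1:ℝ)^n * ((n.factorial:ℝ) * ((B^(n+1))⁻¹ - (A^(n+1))⁻¹)) := by ring
      rw [e1, abs_mul, abs_pow, abs_neg, abs_one, one_pow, one_mul, abs_mul, Nat.abs_cast,
        abs_of_nonpos (by linarith)]
      have hdd : (A^(n+1))⁻¹ - (B^(n+1))⁻¹ ≤ ((n:ℝ)+1) * (A^(n+2))⁻¹ * (B - A) := by
        have := htan
        push_cast at this
        nlinarith [this]
      have hBA : B - A = t - s := by simp only [A, B]; ring
      rw [hBA] at hdd
      calc (n.factorial:ℝ) * -((B^(n+1))⁻¹ - (A^(n+1))⁻¹)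
          = (n.factorial:ℝ) * ((A^(n+1))⁻¹ - (B^(n+1))⁻¹) := by ring
        _ ≤ (n.factorial:ℝ) * (((n:ℝ)+1) * (A^(n+2))⁻¹ * (t-s)) := by
            apply mul_le_mul_of_nonneg_left hdd (by positivity)
        _ = ((n+1).factorial:ℝ) * (t-s) * (A^(n+2))⁻¹ := by
            push_cast [Nat.factorial_succ]
            ring
    have h2 : |Rf (n+2) M| ≤ ((n+1).factorial:ℝ) * (A^(n+2))⁻¹ := by
      rw [Rf_succ, abs_mul, abs_mul, abs_pow, abs_neg, abs_one, one_pow, one_mul, Nat.abs_cast,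
        abs_of_nonneg (by positivity)]
      apply mul_le_mul_of_nonneg_left _ (by positivity)
      exact inv_anti₀ (by positivity) (pow_le_pow_left₀ hA.le hAM (n+2))
    have h3 : |uu s t (n+1) m x| ≤ |Rf (n+1) B - Rf (n+1) A|/(t-s) + |Rf (n+2) M| := by
      unfold uu
      refine (abs_sub _ _).trans ?_
      rw [abs_div, abs_of_pos hts]
    have h4 : |Rf (n+1) B - Rf (n+1) A|/(t-s) ≤ ((n+1).factorial:ℝ) * (A^(n+2))⁻¹ := by
      rw [div_le_iff₀ hts]
      calc |Rf (n+1) B - Rf (n+1) A| ≤ ((n+1).factorial:ℝ) * (t-s) * (A^(n+2))⁻¹ := h1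
        _ = ((n+1).factorial:ℝ) * (A^(n+2))⁻¹ * (t-s) := by ring
    have h5 : (A^(n+2))⁻¹ ≤ ((a+s)^n)⁻¹ * ((((a+s))+(m:ℝ))^2)⁻¹ := by
      have e2 : ((a+s)+(m:ℝ))^(n+2) = ((a+s)+(m:ℝ))^n * ((a+s)+(m:ℝ))^2 := by
        rw [← pow_add]
      have h6 : (a+s)^n * ((a+s)+(m:ℝ))^2 ≤ A^(n+2) := by
        calc (a+s)^n * ((a+s)+(m:ℝ))^2
            ≤ ((a+s)+(m:ℝ))^n * ((a+s)+(m:ℝ))^2 := by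
              apply mul_le_mul_of_nonneg_right (pow_le_pow_left₀ hδ.le (by linarith) n)
                (by positivity)
          _ = ((a+s)+(m:ℝ))^(n+2) := by rw [← pow_add]
          _ ≤ A^(n+2) := pow_le_pow_left₀ hδm.le hδA (n+2)
      rw [← mul_inv]
      exact inv_anti₀ (by positivity) h6
    calc |uu s t (n+1) m x| ≤ |Rf (n+1) B - Rf (n+1) A|/(t-s) + |Rf (n+2) M| := h3
      _ ≤ ((n+1).factorial:ℝ) * (A^(n+2))⁻¹ + ((n+1).factorial:ℝ) * (A^(n+2))⁻¹ :=
          add_le_add h4 h2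
      _ = 2*((n+1).factorial:ℝ) * (A^(n+2))⁻¹ := by ring
      _ ≤ 2*((n+1).factorial:ℝ) * (((a+s)^n)⁻¹ * ((((a+s))+(m:ℝ))^2)⁻¹) := by
          apply mul_le_mul_of_nonneg_left h5 (by positivity)
      _ = (2*((n+1).factorial:ℝ)*((a+s)^n)⁻¹) * ((((a+s))+(m:ℝ))^2)⁻¹ := by ring

lemma Rf_one_eq : Rf 1 = fun y : ℝ => y⁻¹ := by
  funext y
  rw [Rf_succ]
  norm_num

lemma f_eq {s t : ℝ} (hst : s < t) {x : ℝ} (hx : -s < x) :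
    psi (x + (s+t)/2) - (Real.log (Real.Gamma (x+t)) - Real.log (Real.Gamma (x+s)))/(t-s)
      = ∑' m, uu s t 0 m x := by
  have hxs : 0 < x + s := by linarith
  have hxt : 0 < x + t := by linarith
  have hxm : 0 < x + (s+t)/2 := by linarith
  have hts : (0:ℝ) < t - s := by linarith
  obtain ⟨B, hBsum, hB⟩ := uu_bound hst 0 (a := x) hx
  have hsum : Summable (fun m => uu s t 0 m x) :=
    Summable.of_norm_bounded hBsum
      (fun m => by rw [Real.norm_eq_abs]; exact hB m x le_rfl)
  have hΦ : ∀ N : ℕ, Hfun N (x + (s+t)/2) - (Vfun N (x+t) - Vfun N (x+s))/(t-s)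
      = ∑ m ∈ Finset.range (N+1), uu s t 0 m x := by
    intro N
    unfold Hfun Vfun uu
    simp only [zero_add, Rf_one_eq, show Rf 0 = Real.log from rfl]
    rw [Finset.sum_sub_distrib, ← Finset.sum_div, Finset.sum_sub_distrib]
    field_simp
    ring
  have hHt := H_tendsto hxm
  rw [← psi_eq_gfun hxm] at hHt
  have hVt := (Vfun_tendsto hxt).sub (Vfun_tendsto hxs)
  have hlim := hHt.sub (hVt.div_const (t-s))
  have hlim' := hlim.congr hΦ
  have hlim2 : Filter.Tendsto (fun N : ℕ => ∑ m ∈ Finset.range (N+1), uu s t 0 m x) atTop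
      (nhds (∑' m, uu s t 0 m x)) :=
    (hsum.hasSum.tendsto_sum_nat).comp (tendsto_add_atTop_nat 1)
  exact tendsto_nhds_unique hlim' hlim2

lemma main {s t : ℝ} (hst : s < t) :
    ∀ n : ℕ, ∀ x : ℝ, -s < x →
      0 ≤ (-1 : ℝ) ^ n *
        iteratedDeriv n
          (fun x => psi (x + (s + t) / 2) -
            (Real.log (Real.Gamma (x + t)) - Real.log (Real.Gamma (x + s))) / (t - s)) x := by
  intro n x hx
  have hmaster := master (c := -s) (u := uu s t)
    (f := fun x => psi (x + (s + t) / 2) -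
      (Real.log (Real.Gamma (x + t)) - Real.log (Real.Gamma (x + s))) / (t - s))
    (fun n m x hx' => uu_hasDeriv hst n m hx')
    (fun n a ha => uu_bound hst n ha)
    (fun x hx' => f_eq hst hx')
  rw [hmaster n x hx, ← tsum_mul_left]
  apply tsum_nonneg
  intro m
  exact uu_nonneg hst n m hx

theorem stmt_11 (s t : ℝ) (hst : s ≠ t) :
    ∀ n : ℕ, ∀ x : ℝ, -min s t < x →
      0 ≤ (-1 : ℝ) ^ n *
        iteratedDeriv n
          (fun x => psi (x + (s + t) / 2) -
            (Real.log (Real.Gamma (x + t)) - Real.log (Real.Gamma (x + s))) / (t - s)) x := by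
  intro n x hx
  rcases hst.lt_or_gt with h | h
  · rw [min_eq_left h.le] at hx
    exact main h n x hx
  · rw [min_eq_right h.le] at hx
    have hfeq : (fun x => psi (x + (s + t) / 2) -
        (Real.log (Real.Gamma (x + t)) - Real.log (Real.Gamma (x + s))) / (t - s))
      = (fun x => psi (x + (t + s) / 2) -
        (Real.log (Real.Gamma (x + s)) - Real.log (Real.Gamma (x + t))) / (s - t)) := by
      funext y
      have h1 : t - s ≠ 0 := sub_ne_zero.mpr hst.symm
      have h2 : s - t ≠ 0 := sub_ne_zero.mpr hst
      rw [add_comm t s]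
      congr 1
      field_simp
      ring
    rw [hfeq]
    exact main h n x hx
end
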